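/- arXiv:2112.15379 — 5 statements merged into one kernel-verified Lean document; each statement's English description precedes it below -/
import Mathlib

section
/- Define g(k) = (1/k)·(4^k·(k!)^2/(2k)! − 1) for integers k ≥ 1. Then g is strictly decreasing: g(k) > g(k+1) for all k ≥ 1. -/
open Nat

/-!
Writing `c k = centralBinom k`, we have `4^k (k!)² / (2k)! = 4^k / c k` and
`c (k + 1) = 2 (2k + 1) c k / (k + 1)`, so
`g k - g (k + 1) = ((k + 1) 4^k - (2k + 1) c k) / (k (k + 1) (2k + 1) c k)`.
The numerator is positive for `k ≥ 1` by induction, the ratio `2 (2k + 3) / (k + 2)` of consecutive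
values of `(2k + 1) c k / (k + 1)` being less than `4`.
-/

theorem Nat.two_mul_add_one_mul_centralBinom_lt {n : ℕ} (hn : n ≠ 0) :
    (2 * n + 1) * centralBinom n < (n + 1) * 4 ^ n := by
  induction n with
  | zero => exact absurd rfl hn
  | succ n ih =>
    rcases eq_or_ne n 0 with rfl | hn'
    · decide
    refine Nat.lt_of_mul_lt_mul_left (a := n + 1) ?_
    calc (n + 1) * ((2 * (n + 1) + 1) * centralBinom (n + 1))
        = 2 * (2 * n + 3) * ((2 * n + 1) * centralBinom n) := by
          rw [mul_left_comm, succ_mul_centralBinom_succ]; ring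
      _ < 2 * (2 * n + 3) * ((n + 1) * 4 ^ n) :=
          Nat.mul_lt_mul_of_pos_left (ih hn') (by positivity)
      _ ≤ (n + 1) * ((n + 1 + 1) * 4 ^ (n + 1)) := by
          rw [pow_succ]; nlinarith [Nat.zero_le (4 ^ n)]

section CharZeroField

variable {K : Type*} [Field K] [CharZero K]

theorem Nat.cast_factorial_two_mul (k : ℕ) :
    ((2 * k)! : K) = centralBinom k * k ! * k ! := by
  have h := choose_mul_factorial_mul_factorial (by omega : k ≤ 2 * k)
  rw [two_mul, Nat.add_sub_cancel] at h
  rw [centralBinom_eq_two_mul_choose, two_mul]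
  exact_mod_cast h.symm

theorem Nat.four_pow_mul_factorial_sq_div_factorial_two_mul (k : ℕ) :
    (4 ^ k * (k ! : K) ^ 2 / (2 * k)! : K) = 4 ^ k / centralBinom k := by
  have : (k ! : K) ≠ 0 := mod_cast factorial_ne_zero k
  rw [Nat.cast_factorial_two_mul]
  field_simp

theorem Nat.cast_centralBinom_succ (k : ℕ) :
    (centralBinom (k + 1) : K) = 2 * (2 * k + 1) * centralBinom k / (k + 1) := by
  rw [eq_div_iff k.cast_add_one_ne_zero, mul_comm]
  exact_mod_cast succ_mul_centralBinom_succ k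

end CharZeroField

/-- g(k) = (1/k)·(4^k·(k!)^2/(2k)! − 1) is strictly decreasing
for k ≥ 1. -/
theorem normalized_depth_strict_anti (g : ℕ → ℚ)
    (hg : ∀ k : ℕ, 1 ≤ k →
      g k = (1/(k : ℚ)) * (4^k * ((k ! : ℚ))^2 / ((2*k)! : ℚ) - 1)) :
    ∀ k : ℕ, 1 ≤ k → g (k+1) < g k := by
  intro k hk
  have hc : (0 : ℚ) < centralBinom k := mod_cast centralBinom_pos k
  have hk0 : (0 : ℚ) < k := mod_cast hk
  have key : (2 * k + 1 : ℚ) * centralBinom k < (k + 1) * 4 ^ k :=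
    mod_cast Nat.two_mul_add_one_mul_centralBinom_lt (by omega : k ≠ 0)
  have diff : 1 / (k : ℚ) * (4 ^ k / centralBinom k - 1) -
      1 / (k + 1) * (4 ^ (k + 1) / (2 * (2 * k + 1) * centralBinom k / (k + 1)) - 1) =
      ((k + 1) * 4 ^ k - (2 * k + 1) * centralBinom k) /
        (k * (k + 1) * (2 * k + 1) * centralBinom k) := by
    field_simp
    ring
  rw [← sub_pos, hg k hk, hg (k + 1) (by omega), Nat.four_pow_mul_factorial_sq_div_factorial_two_mul,
    Nat.four_pow_mul_factorial_sq_div_factorial_two_mul, Nat.cast_centralBinom_succ]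
  push_cast
  rw [diff]
  exact div_pos (sub_pos.2 key) (by positivity)
end

section
/- For any planted binary phylogenetic tree T on n ≥ 1 leaves (with root ρ of outdegree 1), letting A(T) = ∑_{v node of T} (number of ancestors of v) and K(T) = ∑_{ℓ leaf of T} depth(ℓ), we have K(T) ≤ A(T) + 1 ≤ 2·K(T). -/
open Relation

/-- In-degree of a vertex in a digraph on `Fin m`. -/
noncomputable def inDeg {m : ℕ} (E : Fin m → Fin m → Prop) (v : Fin m) : ℕ :=
  Nat.card {u : Fin m // E u v}

/-- Out-degree of a vertex in a digraph on `Fin m`. -/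
noncomputable def outDeg {m : ℕ} (E : Fin m → Fin m → Prop) (v : Fin m) : ℕ :=
  Nat.card {u : Fin m // E v u}

/-- A planted binary phylogenetic network with `m` vertices and `n` labeled
leaves: an acyclic digraph whose root has indegree 0 and outdegree 1, whose
leaves have indegree 1 and outdegree 0 and are labeled bijectively by `Fin n`,
every other vertex being a tree node (indegree 1, outdegree 2) or a
reticulation node (indegree 2, outdegree 1), and all vertices reachable from
the root. -/
structure PhyloNet (m n : ℕ) where
  E : Fin m → Fin m → Prop
  root : Fin m
  leaf : Fin n → Fin m
  leaf_inj : Function.Injective leaf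
  acyclic : ∀ v, ¬ TransGen E v v
  reach : ∀ v, ReflTransGen E root v
  root_in : inDeg E root = 0
  root_out : outDeg E root = 1
  leaf_in : ∀ i, inDeg E (leaf i) = 1
  leaf_out : ∀ i, outDeg E (leaf i) = 0
  internal : ∀ v, v ≠ root → (∀ i, leaf i ≠ v) →
    (inDeg E v = 1 ∧ outDeg E v = 2) ∨ (inDeg E v = 2 ∧ outDeg E v = 1)

/-- A vertex is a reticulation node iff its indegree is 2. -/
def PhyloNet.isRet {m n : ℕ} (N : PhyloNet m n) (v : Fin m) : Prop :=
  inDeg N.E v = 2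

/-- A network is simplex iff the child of every reticulation node is a leaf. -/
def PhyloNet.isSimplex {m n : ℕ} (N : PhyloNet m n) : Prop :=
  ∀ v u, N.isRet v → N.E v u → ∃ i, u = N.leaf i

/-- Isomorphism of phylogenetic networks: a vertex bijection preserving edges,
the root, and the leaf labeling. -/
def netIso {m n : ℕ} (N M : PhyloNet m n) : Prop :=
  ∃ σ : Fin m ≃ Fin m, (∀ u v, N.E u v ↔ M.E (σ u) (σ v)) ∧
    σ N.root = M.root ∧ ∀ i, σ (N.leaf i) = M.leaf i

/-- The number of (strict) ancestors of a vertex; in a tree this equals the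
depth of the vertex (the number of edges on the root-to-vertex path). -/
noncomputable def ancCount {m n : ℕ} (N : PhyloNet m n) (v : Fin m) : ℕ :=
  Nat.card {u : Fin m // TransGen N.E u v}

namespace SackinAux

variable {m : ℕ}

noncomputable def fset (p : Fin m → Prop) : Finset (Fin m) :=
  @Finset.filter _ p (Classical.decPred p) Finset.univ

lemma mem_fset {p : Fin m → Prop} {v : Fin m} : v ∈ fset p ↔ p v := by
  classical
  simp [fset]

lemma fset_eq_filter (p : Fin m → Prop) [DecidablePred p] :
    fset p = Finset.univ.filter p := by
  ext v; simp [mem_fset]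

lemma natCard_eq_fset (p : Fin m → Prop) :
    Nat.card {u : Fin m // p u} = (fset p).card := by
  classical
  rw [fset_eq_filter, Nat.card_eq_fintype_card, Fintype.card_subtype]

noncomputable def indic (p : Prop) : ℕ :=
  @ite _ p (Classical.propDecidable p) 1 0

lemma indic_pos {p : Prop} (h : p) : indic p = 1 := by
  simp [indic, h]

lemma indic_neg {p : Prop} (h : ¬ p) : indic p = 0 := by
  simp [indic, h]

lemma swap (p : Fin m → Prop) (r : Fin m → Fin m → Prop) :
    ∑ v ∈ fset p, (fset fun u => r u v).card
      = ∑ u : Fin m, (fset fun v => r u v ∧ p v).card := by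
  classical
  simp only [fset_eq_filter, Finset.card_filter]
  rw [Finset.sum_filter, Finset.sum_comm]
  apply Finset.sum_congr rfl
  intro u _
  by_cases h : p u <;> simp [h]

end SackinAux


section part2
open Relation SackinAux

variable {m : ℕ} (E : Fin m → Fin m → Prop)

lemma unique_parent (htree : ∀ v, inDeg E v ≤ 1) {x y u : Fin m}
    (hx : E x u) (hy : E y u) : x = y := by
  classical
  have h := htree u
  rw [inDeg, Nat.card_eq_fintype_card] at h
  have hs : Subsingleton {z : Fin m // E z u} :=
    Fintype.card_le_one_iff_subsingleton.mp h
  exact congrArg Subtype.val (hs.elim ⟨x, hx⟩ ⟨y, hy⟩)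

lemma comparable (htree : ∀ v, inDeg E v ≤ 1) {b u : Fin m}
    (hbu : ReflTransGen E b u) :
    ∀ a, ReflTransGen E a u → ReflTransGen E a b ∨ ReflTransGen E b a := by
  induction hbu with
  | refl => exact fun a ha => Or.inl ha
  | @tail c u hbc hcu ih =>
    intro a hau
    rcases hau.cases_tail with h | ⟨d, had, hdu⟩
    · subst h
      exact Or.inr (hbc.tail hcu)
    · cases unique_parent E htree hdu hcu
      exact ih a had

lemma no_common_desc (hac : ∀ v, ¬ TransGen E v v) (htree : ∀ v, inDeg E v ≤ 1)
    {u c c' v : Fin m} (hc : E u c) (hc' : E u c') (hne : c ≠ c')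
    (h1 : ReflTransGen E c v) (h2 : ReflTransGen E c' v) : False := by
  have key : ∀ a b : Fin m, E u a → E u b → a ≠ b → ReflTransGen E a b → False := by
    intro a b ha hb hab hpath
    rcases hpath.cases_tail with h | ⟨d, had, hdb⟩
    · exact hab h.symm
    · cases unique_parent E htree hdb hb
      exact hac u (TransGen.head' ha had)
  rcases comparable E htree h1 c' h2 with h | h
  · exact key c' c hc' hc (Ne.symm hne) h
  · exact key c c' hc hc' hne h

lemma cnt_decomp (hac : ∀ v, ¬ TransGen E v v) (htree : ∀ v, inDeg E v ≤ 1)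
    (p : Fin m → Prop) (u : Fin m) :
    (fset fun v => TransGen E u v ∧ p v).card
      = ∑ c ∈ fset (E u), ((fset fun v => TransGen E c v ∧ p v).card
          + indic (p c)) := by
  classical
  have hdecomp : (fset fun v => TransGen E u v ∧ p v)
      = (fset (E u)).biUnion (fun c => fset fun v => ReflTransGen E c v ∧ p v) := by
    ext v
    simp only [mem_fset, Finset.mem_biUnion]
    constructor
    · rintro ⟨ht, hp⟩
      obtain ⟨c, hc, hcv⟩ := TransGen.head'_iff.mp ht
      exact ⟨c, hc, hcv, hp⟩
    · rintro ⟨c, hc, hcv, hp⟩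
      exact ⟨TransGen.head' hc hcv, hp⟩
  rw [hdecomp, Finset.card_biUnion]
  · apply Finset.sum_congr rfl
    intro c _
    have hnotin : c ∉ (fset fun v => TransGen E c v ∧ p v) := by
      simp only [mem_fset]
      rintro ⟨h, -⟩
      exact hac c h
    by_cases hp : p c
    · have he : (fset fun v => ReflTransGen E c v ∧ p v)
          = insert c (fset fun v => TransGen E c v ∧ p v) := by
        ext v
        simp only [mem_fset, Finset.mem_insert]
        constructor
        · rintro ⟨hr, hpv⟩
          rcases reflTransGen_iff_eq_or_transGen.mp hr with h | h
          · exact Or.inl h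
          · exact Or.inr ⟨h, hpv⟩
        · rintro (rfl | ⟨ht, hpv⟩)
          · exact ⟨ReflTransGen.refl, hp⟩
          · exact ⟨ht.to_reflTransGen, hpv⟩
      rw [he, Finset.card_insert_of_notMem hnotin, indic_pos hp, add_comm]
    · have he : (fset fun v => ReflTransGen E c v ∧ p v)
          = fset fun v => TransGen E c v ∧ p v := by
        ext v
        simp only [mem_fset]
        constructor
        · rintro ⟨hr, hpv⟩
          rcases reflTransGen_iff_eq_or_transGen.mp hr with rfl | h
          · exact absurd hpv hp
          · exact ⟨h, hpv⟩
        · rintro ⟨ht, hpv⟩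
          exact ⟨ht.to_reflTransGen, hpv⟩
      rw [he, indic_neg hp, add_zero]
  · intro c hc c' hc' hne
    rw [Function.onFun, Finset.disjoint_left]
    intro v hv hv'
    exact no_common_desc E hac htree (mem_fset.mp hc) (mem_fset.mp hc') hne
      (mem_fset.mp hv).1 (mem_fset.mp hv').1

end part2

section part3
open Relation SackinAux

variable {m n : ℕ}

lemma card_ch (E : Fin m → Fin m → Prop) (u : Fin m) :
    (fset (E u)).card = outDeg E u := (natCard_eq_fset _).symm

noncomputable def cnt (T : PhyloNet m n) (p : Fin m → Prop) (u : Fin m) : ℕ :=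
  (fset fun v => TransGen T.E u v ∧ p v).card

def isLf (T : PhyloNet m n) (v : Fin m) : Prop := ∃ i, T.leaf i = v

noncomputable def wt (T : PhyloNet m n) (v : Fin m) : ℕ :=
  @ite _ (isLf T v) (Classical.propDecidable _) 0
    (@ite _ (v = T.root) (Classical.propDecidable _) 1 2)

lemma wt_leaf (T : PhyloNet m n) {v : Fin m} (h : isLf T v) : wt T v = 0 := by
  simp [wt, h]

lemma wt_root (T : PhyloNet m n) (h : ¬ isLf T T.root) : wt T T.root = 1 := by
  simp [wt, h]

lemma wt_other (T : PhyloNet m n) {v : Fin m} (h : ¬ isLf T v) (h' : v ≠ T.root) :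
    wt T v = 2 := by
  simp [wt, h, h']

lemma cnt_decomp' (T : PhyloNet m n) (htree : ∀ v, inDeg T.E v ≤ 1)
    (p : Fin m → Prop) (u : Fin m) :
    cnt T p u = ∑ c ∈ fset (T.E u), (cnt T p c + indic (p c)) :=
  cnt_decomp T.E T.acyclic htree p u

lemma key (T : PhyloNet m n) (htree : ∀ v, inDeg T.E v ≤ 1) :
    ∀ u, cnt T (fun v => ¬ isLf T v) u + wt T u ≤ cnt T (isLf T) u := by
  have hwf : WellFounded (fun a b : Fin m => T.E b a) := by
    have h1 : WellFounded (fun a b : Fin m => TransGen T.E b a) := by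
      letI : IsTrans (Fin m) (fun a b => TransGen T.E b a) :=
        ⟨fun a b c hab hbc => TransGen.trans hbc hab⟩
      letI : IsIrrefl (Fin m) (fun a b => TransGen T.E b a) :=
        ⟨fun a h => T.acyclic a h⟩
      exact Finite.wellFounded_of_trans_of_irrefl _
    exact Subrelation.wf (fun h => TransGen.single h) h1
  intro u
  refine hwf.induction (C := fun u => cnt T (fun v => ¬ isLf T v) u + wt T u ≤ cnt T (isLf T) u) u ?_
  intro u ih
  by_cases hlf : isLf T u
  · have hout : (fset (T.E u)).card = 0 := by
      obtain ⟨i, rfl⟩ := hlf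
      rw [card_ch]
      exact T.leaf_out i
    have h0 : cnt T (fun v => ¬ isLf T v) u = 0 := by
      rw [cnt_decomp' T htree, Finset.card_eq_zero.mp hout, Finset.sum_empty]
    rw [h0, wt_leaf T hlf]
    exact Nat.zero_le _
  · have hch : (fset (T.E u)).card = wt T u := by
      rw [card_ch]
      by_cases hr : u = T.root
      · subst hr
        rw [T.root_out, wt_root T hlf]
      · rcases T.internal u hr (fun i hi => hlf ⟨i, hi⟩) with ⟨hin, hout⟩ | ⟨hin, _⟩
        · rw [hout, wt_other T hlf hr]
        · have h2 := htree u
          rw [hin] at h2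
          omega
    rw [cnt_decomp' T htree, cnt_decomp' T htree (isLf T), ← hch,
      Finset.card_eq_sum_ones, ← Finset.sum_add_distrib]
    apply Finset.sum_le_sum
    intro c hc
    have hEc : T.E u c := mem_fset.mp hc
    have ihc := ih c hEc
    by_cases hcl : isLf T c
    · have h1 : indic (isLf T c) = 1 := indic_pos hcl
      have h0 : indic (¬ isLf T c) = 0 := indic_neg (not_not_intro hcl)
      simp only [h1, h0]
      simp only [wt_leaf T hcl, add_zero] at ihc
      omega
    · have hcr : c ≠ T.root := by
        intro h
        have hpos : 0 < inDeg T.E c := by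
          rw [inDeg]
          have : Nonempty {x : Fin m // T.E x c} := ⟨⟨u, hEc⟩⟩
          exact Nat.card_pos
        rw [h, T.root_in] at hpos
        exact Nat.lt_irrefl 0 hpos
      have h0 : indic (isLf T c) = 0 := indic_neg hcl
      have h1 : indic (¬ isLf T c) = 1 := indic_pos hcl
      simp only [h1, h0]
      simp only [wt_other T hcl hcr] at ihc
      omega

end part3

/-- for a planted binary phylogenetic tree T on n ≥ 1 leaves,
with A(T) = ∑_{v node} (#ancestors of v) and K(T) = ∑_{ℓ leaf} depth(ℓ)
(the Sackin index; in a tree the depth equals the ancestor count),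
we have K(T) ≤ A(T) + 1 ≤ 2·K(T). -/
theorem sackin_vs_total_depth_tree (n : ℕ) (hn : 1 ≤ n)
    (T : PhyloNet (2*n) n) (htree : ∀ v, inDeg T.E v ≤ 1) :
    (∑ i : Fin n, ancCount T (T.leaf i)) ≤ (∑ v : Fin (2*n), ancCount T v) + 1 ∧
    (∑ v : Fin (2*n), ancCount T v) + 1 ≤ 2 * ∑ i : Fin n, ancCount T (T.leaf i) := by
  classical
  open SackinAux in
  have hanc : ∀ v, ancCount T v = (fset fun u => TransGen T.E u v).card :=
    fun v => natCard_eq_fset _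
  have hleafset : fset (isLf T) = Finset.univ.image T.leaf := by
    ext v
    simp [mem_fset, isLf, eq_comm]
  have hK : ∑ i : Fin n, ancCount T (T.leaf i) = ∑ v ∈ fset (isLf T), ancCount T v := by
    rw [hleafset, Finset.sum_image (fun i _ j _ h => T.leaf_inj h)]
  have hA : ∑ v : Fin (2*n), ancCount T v
      = (∑ v ∈ fset (isLf T), ancCount T v)
        + ∑ v ∈ fset (fun v => ¬ isLf T v), ancCount T v := by
    rw [fset_eq_filter, fset_eq_filter]
    exact (Finset.sum_filter_add_sum_filter_not Finset.univ (isLf T) _).symm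
  have hswapL : ∑ v ∈ fset (isLf T), ancCount T v
      = ∑ u : Fin (2*n), cnt T (isLf T) u := by
    simp only [hanc]
    exact swap (isLf T) (fun u v => TransGen T.E u v)
  have hswapN : ∑ v ∈ fset (fun v => ¬ isLf T v), ancCount T v
      = ∑ u : Fin (2*n), cnt T (fun v => ¬ isLf T v) u := by
    simp only [hanc]
    exact swap (fun v => ¬ isLf T v) (fun u v => TransGen T.E u v)
  have hsum : (∑ u : Fin (2*n), cnt T (fun v => ¬ isLf T v) u)
      + (∑ u : Fin (2*n), wt T u) ≤ ∑ u : Fin (2*n), cnt T (isLf T) u := by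
    rw [← Finset.sum_add_distrib]
    exact Finset.sum_le_sum (fun u _ => key T htree u)
  have hrootw : 1 ≤ ∑ u : Fin (2*n), wt T u := by
    have hroot_nl : ¬ isLf T T.root := by
      rintro ⟨i, hi⟩
      have h1 := T.leaf_in i
      rw [hi, T.root_in] at h1
      exact one_ne_zero h1.symm
    calc (1 : ℕ) = wt T T.root := (wt_root T hroot_nl).symm
    _ ≤ ∑ u : Fin (2*n), wt T u :=
      Finset.single_le_sum (fun u _ => Nat.zero_le _) (Finset.mem_univ _)
  rw [hK, hA, hswapL, hswapN]
  omega
end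

section
/- For k ≥ 1, j ≥ 0, and n = k + j, the quantity D_C(k,j) = (n(2n-1)/k)·(4^k(k!)^2/(2k)! − 1) satisfies (√π·n(2n-1)/√k)·(1 − 1/√(πk) ) ≤ D_C(k,j) ≤ √π·n(2n-1)/√k for all k ≥ 2. -/
open Nat Real

/-! The ratio `r k = 4 ^ k / (2k choose k)` satisfies `r k ^ 2 = (2k + 1) W k`, where `W k` is the
`k`-th partial Wallis product. The classical bounds `(2k + 1)/(2k + 2) · π/2 ≤ W k ≤ π/2` give
`π k ≤ r k ^ 2 ≤ π k + π/2`, hence `√(π k) ≤ r k ≤ √(π k) + 1`; multiplying by `n (2n - 1) / k`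
yields both inequalities. -/

noncomputable def fourPowDivCentralBinom (k : ℕ) : ℝ := 4 ^ k * (k ! : ℝ) ^ 2 / ((2 * k)! : ℝ)

namespace fourPowDivCentralBinom

lemma pos (k : ℕ) : 0 < fourPowDivCentralBinom k := by
  unfold fourPowDivCentralBinom; positivity

lemma sq_eq_mul_wallis (k : ℕ) :
    fourPowDivCentralBinom k ^ 2 = (2 * k + 1) * Wallis.W k := by
  rw [Wallis.W_eq_factorial_ratio, fourPowDivCentralBinom, pow_mul]
  field_simp
  rw [← pow_mul, ← pow_mul, mul_comm]
  norm_num [pow_mul]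

lemma pi_mul_le_sq (k : ℕ) : π * k ≤ fourPowDivCentralBinom k ^ 2 := by
  have hW := Wallis.le_W k
  rw [div_mul_eq_mul_div, div_le_iff₀ (by positivity)] at hW
  rw [sq_eq_mul_wallis]
  nlinarith [pi_pos, Nat.cast_nonneg (α := ℝ) k]

lemma sq_le (k : ℕ) : fourPowDivCentralBinom k ^ 2 ≤ π * k + π / 2 := by
  rw [sq_eq_mul_wallis]
  nlinarith [Wallis.W_le k, Nat.cast_nonneg (α := ℝ) k]

lemma sqrt_pi_mul_le (k : ℕ) : √(π * k) ≤ fourPowDivCentralBinom k :=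
  Real.sqrt_le_iff.mpr ⟨(pos k).le, pi_mul_le_sq k⟩

lemma le_sqrt_pi_mul_add_one {k : ℕ} (hk : 1 ≤ k) :
    fourPowDivCentralBinom k ≤ √(π * k) + 1 := by
  have hs : 1 ≤ √(π * k) := Real.one_le_sqrt.mpr <| by
    nlinarith [pi_gt_three, (Nat.one_le_cast (α := ℝ)).mpr hk]
  have hsq : √(π * k) ^ 2 = π * k := Real.sq_sqrt (by positivity)
  by_contra! h
  nlinarith [sq_le k, pi_lt_four]

end fourPowDivCentralBinom

lemma sqrt_pi_mul_div_sqrt {k : ℕ} (hk : 0 < k) (A : ℝ) : √π * A / √k = A / k * √(π * k) := by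
  have hk' : (0 : ℝ) < k := Nat.cast_pos.mpr hk
  rw [Real.sqrt_mul pi_pos.le, div_mul_eq_mul_div, div_eq_div_iff (by positivity) hk'.ne']
  linear_combination (-(√π * A)) * Real.mul_self_sqrt hk'.le

/-- for k ≥ 2, n = k+j, the quantity
D_C(k,j) = (n(2n-1)/k)·(4^k(k!)^2/(2k)! − 1) satisfies
(√π·n(2n-1)/√k)·(1 − 1/√(πk)) ≤ D_C(k,j) ≤ √π·n(2n-1)/√k. -/
theorem expected_component_depth_asymptotics (k j : ℕ) (hk : 2 ≤ k) :
    (Real.sqrt Real.pi * ((k+j : ℕ) : ℝ) * (2*((k+j : ℕ) : ℝ) - 1) / Real.sqrt k) *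
        (1 - 1 / Real.sqrt (Real.pi * k))
      ≤ (((k+j : ℕ) : ℝ) * (2*((k+j : ℕ) : ℝ) - 1) / (k : ℝ)) *
          (4^k * ((k ! : ℝ))^2 / ((2*k)! : ℝ) - 1) ∧
    (((k+j : ℕ) : ℝ) * (2*((k+j : ℕ) : ℝ) - 1) / (k : ℝ)) *
        (4^k * ((k ! : ℝ))^2 / ((2*k)! : ℝ) - 1)
      ≤ Real.sqrt Real.pi * ((k+j : ℕ) : ℝ) * (2*((k+j : ℕ) : ℝ) - 1) / Real.sqrt k := by
  have hn : (2 : ℝ) ≤ ((k+j : ℕ) : ℝ) := by exact_mod_cast (by omega : 2 ≤ k + j)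
  have hA : 0 ≤ ((k+j : ℕ) : ℝ) * (2*((k+j : ℕ) : ℝ) - 1) / k :=
    div_nonneg (mul_nonneg (by linarith) (by linarith)) k.cast_nonneg
  have hlo := fourPowDivCentralBinom.sqrt_pi_mul_le k
  have hhi := fourPowDivCentralBinom.le_sqrt_pi_mul_add_one (k := k) (by omega)
  have hs : √(π * k) * (1 - 1 / √(π * k)) = √(π * k) - 1 := by
    have : 0 < √(π * k) := by positivity
    field_simp
  rw [mul_assoc (√π) ((k+j : ℕ) : ℝ), sqrt_pi_mul_div_sqrt (by omega),
    ← fourPowDivCentralBinom.eq_1, mul_assoc, hs]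
  exact ⟨mul_le_mul_of_nonneg_left (by linarith) hA, mul_le_mul_of_nonneg_left (by linarith) hA⟩
end

section
/- Suppose a sequence of positive reals S_1,...,S_n is unimodal with peak near k₀ (increasing for k ≤ k₀, decreasing for k > k₀), and d_1 ≥ d_2 ≥ ... ≥ d_n > 0. If L ≤ d_k ≤ U for all integers k in [k₀, 2k₀], d_k ≤ d_{⌈2k₀⌉} for k > 2k₀, and ∑_{k>2k₀} S_k ≤ ∑_{k₀ ≤ k ≤ 2k₀} S_k, then the weighted average (∑_{k=1}^n S_k d_k)/(∑_{k=1}^n S_k) lies in [min(L/2, d_{⌊k₀⌋}), max(U, (1/⌊k₀⌋)∑_{k ≤ ⌊k₀⌋} d_k)]. -/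
/-- abstract averaging lemma. If the positive weights S are
unimodal with peak near k₀ (increasing for k ≤ k₀, decreasing for k > k₀),
the values d are decreasing and positive, L ≤ d_k ≤ U on [k₀, 2k₀],
d_k ≤ d_{⌈2k₀⌉} for k > 2k₀, and the tail weight ∑_{k>2k₀} S_k is at most the
middle weight ∑_{k₀≤k≤2k₀} S_k, then the weighted average
(∑ S_k d_k)/(∑ S_k) lies in [min(L/2, d_{⌊k₀⌋}), max(U, (1/⌊k₀⌋)∑_{k≤⌊k₀⌋} d_k)]. -/
theorem unimodal_weighted_average_bounds (n : ℕ) (hn : 2 ≤ n) (k₀ : ℝ)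
    (hk₀ : 1 ≤ k₀) (h2k₀ : 2*k₀ ≤ (n : ℝ))
    (S d : ℕ → ℝ) (L U : ℝ)
    (hSpos : ∀ k, 1 ≤ k → k ≤ n → 0 < S k)
    (hSinc : ∀ k, 1 ≤ k → k < n → (k : ℝ) ≤ k₀ → S k ≤ S (k+1))
    (hSdec : ∀ k, 1 ≤ k → k < n → k₀ < (k : ℝ) → S (k+1) ≤ S k)
    (hdanti : ∀ k l, 1 ≤ k → k ≤ l → l ≤ n → d l ≤ d k)
    (hdpos : ∀ k, 1 ≤ k → k ≤ n → 0 < d k)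
    (hLU : ∀ k : ℕ, k₀ ≤ (k : ℝ) → (k : ℝ) ≤ 2*k₀ → L ≤ d k ∧ d k ≤ U)
    (htail : ∀ k : ℕ, 2*k₀ < (k : ℝ) → k ≤ n → d k ≤ d ⌈2*k₀⌉.toNat)
    (hsum : (∑ k ∈ (Finset.Icc 1 n).filter (fun k : ℕ => 2*k₀ < (k : ℝ)), S k)
        ≤ ∑ k ∈ (Finset.Icc 1 n).filter
            (fun k : ℕ => k₀ ≤ (k : ℝ) ∧ (k : ℝ) ≤ 2*k₀), S k) :
    min (L/2) (d ⌊k₀⌋.toNat)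
      ≤ (∑ k ∈ Finset.Icc 1 n, S k * d k) / (∑ k ∈ Finset.Icc 1 n, S k) ∧
    (∑ k ∈ Finset.Icc 1 n, S k * d k) / (∑ k ∈ Finset.Icc 1 n, S k)
      ≤ max U ((1/(⌊k₀⌋.toNat : ℝ)) * ∑ k ∈ Finset.Icc 1 ⌊k₀⌋.toNat, d k) := by
  set m : ℕ := ⌊k₀⌋.toNat with hm
  have hfl0 : (0:ℤ) ≤ ⌊k₀⌋ := Int.floor_nonneg.mpr (by linarith)
  have hm1 : 1 ≤ m := by
    have : (1 : ℤ) ≤ ⌊k₀⌋ := Int.le_floor.mpr (by exact_mod_cast hk₀)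
    omega
  have hmcast : (m : ℝ) = (⌊k₀⌋ : ℝ) := by
    rw [hm]; exact_mod_cast congrArg (fun z : ℤ => (z:ℝ)) (Int.toNat_of_nonneg hfl0)
  have hmr : (m : ℝ) ≤ k₀ := by rw [hmcast]; exact Int.floor_le k₀
  have hmltk : k₀ < (m : ℝ) + 1 := by rw [hmcast]; exact Int.lt_floor_add_one k₀
  have hmn : m ≤ n := by
    have : (m : ℝ) ≤ (n : ℝ) := by linarith
    exact_mod_cast this
  set T := Finset.Icc 1 n with hT
  -- positivity of the denominator
  have hmemT : ∀ k ∈ T, 1 ≤ k ∧ k ≤ n := by intro k hk; simpa using Finset.mem_Icc.mp hk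
  have hTne : T.Nonempty := ⟨1, by simp [hT]; omega⟩
  have hW : 0 < ∑ k ∈ T, S k :=
    Finset.sum_pos (fun k hk => hSpos k (hmemT k hk).1 (hmemT k hk).2) hTne
  have hnum : 0 < ∑ k ∈ T, S k * d k :=
    Finset.sum_pos (fun k hk => mul_pos (hSpos k (hmemT k hk).1 (hmemT k hk).2)
      (hdpos k (hmemT k hk).1 (hmemT k hk).2)) hTne
  constructor
  · -- lower bound
    set c := min (L/2) (d m) with hc
    rcases le_or_gt c 0 with hc0 | hc0
    · exact hc0.trans (le_of_lt (div_pos hnum hW))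
    rw [le_div_iff₀ hW]
    -- split T in three parts
    set Low := T.filter (fun k : ℕ => (k:ℝ) < k₀) with hLow
    set Mid := T.filter (fun k : ℕ => k₀ ≤ (k:ℝ) ∧ (k:ℝ) ≤ 2*k₀) with hMid
    set High := T.filter (fun k : ℕ => 2*k₀ < (k:ℝ)) with hHigh
    have hsplit : ∀ f : ℕ → ℝ, ∑ k ∈ T, f k
        = ∑ k ∈ Low, f k + ∑ k ∈ Mid, f k + ∑ k ∈ High, f k := by
      intro f
      rw [← Finset.sum_filter_add_sum_filter_not T (fun k : ℕ => (k:ℝ) < k₀) f, ← hLow]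
      have : T.filter (fun k : ℕ => ¬ (k:ℝ) < k₀)
          = Mid ∪ High := by
        ext k
        simp only [Finset.mem_filter, Finset.mem_union, hMid, hHigh]
        constructor
        · rintro ⟨hk, hk2⟩
          push_neg at hk2
          rcases le_or_gt ((k:ℝ)) (2*k₀) with h | h
          · exact Or.inl ⟨hk, hk2, h⟩
          · exact Or.inr ⟨hk, h⟩
        · rintro (⟨hk, h1, _⟩ | ⟨hk, h⟩)
          · exact ⟨hk, by push_neg; exact h1⟩
          · exact ⟨hk, by push_neg; linarith⟩
      rw [this, Finset.sum_union, add_assoc]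
      simp only [hMid, hHigh, Finset.disjoint_left, Finset.mem_filter]
      rintro a ⟨_, _, h2⟩ ⟨_, h3⟩
      linarith
    rw [hsplit (fun k => S k * d k), hsplit S]
    have hLowS : 0 ≤ ∑ k ∈ Low, S k :=
      Finset.sum_nonneg fun k hk => le_of_lt
        (hSpos k (hmemT k (Finset.filter_subset _ _ hk)).1 (hmemT k (Finset.filter_subset _ _ hk)).2)
    have hMidS : 0 ≤ ∑ k ∈ Mid, S k :=
      Finset.sum_nonneg fun k hk => le_of_lt
        (hSpos k (hmemT k (Finset.filter_subset _ _ hk)).1 (hmemT k (Finset.filter_subset _ _ hk)).2)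
    have hA : c * ∑ k ∈ Low, S k ≤ ∑ k ∈ Low, S k * d k := by
      rw [Finset.mul_sum]
      refine Finset.sum_le_sum fun k hk => ?_
      have hkT := Finset.filter_subset _ _ hk
      have hk1 := (hmemT k hkT).1
      have hkn := (hmemT k hkT).2
      have hklt : (k:ℝ) < k₀ := (Finset.mem_filter.mp hk).2
      have hkm : k ≤ m := by
        by_contra h
        push_neg at h
        have : (m:ℝ) + 1 ≤ (k:ℝ) := by exact_mod_cast h
        linarith
      have hdk : d m ≤ d k := hdanti k m hk1 hkm hmn
      have hcd : c ≤ d k := le_trans (min_le_right _ _) hdk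
      nlinarith [hSpos k hk1 hkn]
    have hB : 2 * c * ∑ k ∈ Mid, S k ≤ ∑ k ∈ Mid, S k * d k := by
      rw [Finset.mul_sum]
      refine Finset.sum_le_sum fun k hk => ?_
      have hkT := Finset.filter_subset _ _ hk
      have hk1 := (hmemT k hkT).1
      have hkn := (hmemT k hkT).2
      obtain ⟨_, h1, h2⟩ := Finset.mem_filter.mp hk
      have hLd : L ≤ d k := (hLU k h1 h2).1
      have : 2 * c ≤ L := by
        have := min_le_left (L/2) (d m); rw [← hc] at this; linarith
      nlinarith [hSpos k hk1 hkn]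
    have hC : 0 ≤ ∑ k ∈ High, S k * d k :=
      Finset.sum_nonneg fun k hk => by
        have hkT := Finset.filter_subset _ _ hk
        exact le_of_lt (mul_pos (hSpos k (hmemT k hkT).1 (hmemT k hkT).2)
          (hdpos k (hmemT k hkT).1 (hmemT k hkT).2))
    nlinarith [hsum]
  · -- upper bound
    set C := (1/(m : ℝ)) * ∑ k ∈ Finset.Icc 1 m, d k with hC
    rw [div_le_iff₀ hW]
    have hTsplit : T = Finset.Icc 1 m ∪ Finset.Ioc m n := by
      rw [hT]; ext k; simp only [Finset.mem_Icc, Finset.mem_union, Finset.mem_Ioc]; omega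
    have hdisj : Disjoint (Finset.Icc 1 m) (Finset.Ioc m n) := by
      simp only [Finset.disjoint_left, Finset.mem_Icc, Finset.mem_Ioc]
      omega
    have hsplit2 : ∀ f : ℕ → ℝ, ∑ k ∈ T, f k
        = ∑ k ∈ Finset.Icc 1 m, f k + ∑ k ∈ Finset.Ioc m n, f k := by
      intro f; rw [hTsplit, Finset.sum_union hdisj]
    -- monotonicity of S on [1, m]
    have hSmono : ∀ i j, 1 ≤ i → i ≤ j → j ≤ m → S i ≤ S j := by
      intro i j h1 hij hjm
      induction j with
      | zero => omega
      | succ jj ih =>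
        rcases Nat.lt_or_ge i (jj+1) with h | h
        · have hij' : i ≤ jj := by omega
          have hjj1 : 1 ≤ jj := by omega
          have hjjn : jj < n := by omega
          have hjjk : (jj:ℝ) ≤ k₀ := by
            have : (jj:ℝ) + 1 ≤ (m:ℝ) := by exact_mod_cast hjm
            linarith
          exact (ih hij' (by omega)).trans (hSinc jj hjj1 hjjn hjjk)
        · have : i = jj + 1 := by omega
          rw [this]
      done
    -- Chebyshev on [1, m]
    have hcheb : ∑ k ∈ Finset.Icc 1 m, S k * d k ≤ C * ∑ k ∈ Finset.Icc 1 m, S k := by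
      have hanti : AntivaryOn S d (Finset.Icc 1 m : Finset ℕ) := by
        intro i hi j hj hdij
        simp only [Finset.coe_Icc, Set.mem_Icc] at hi hj
        have hji : j < i := by
          by_contra h
          push_neg at h
          have := hdanti i j hi.1 h (hj.2.trans hmn)
          linarith
        exact hSmono j i hj.1 (le_of_lt hji) hi.2
      have := hanti.card_mul_sum_le_sum_mul_sum
      have hcard : (Finset.Icc 1 m).card = m := by rw [Nat.card_Icc]; omega
      rw [hcard] at this
      have hmpos : (0:ℝ) < (m:ℝ) := by exact_mod_cast hm1
      have hinv : (0:ℝ) < 1/(m:ℝ) := by positivity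
      rw [hC]
      calc ∑ k ∈ Finset.Icc 1 m, S k * d k
          = 1/(m:ℝ) * ((m:ℝ) * ∑ k ∈ Finset.Icc 1 m, S k * d k) := by field_simp
        _ ≤ 1/(m:ℝ) * ((∑ i ∈ Finset.Icc 1 m, S i) * ∑ i ∈ Finset.Icc 1 m, d i) :=
            mul_le_mul_of_nonneg_left this (le_of_lt hinv)
        _ = (1/(m:ℝ) * ∑ i ∈ Finset.Icc 1 m, d i) * ∑ i ∈ Finset.Icc 1 m, S i := by ring
    -- upper bound on the tail: d k ≤ U for k in Ioc m n
    have htailU : ∀ k ∈ Finset.Ioc m n, d k ≤ U := by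
      intro k hk
      obtain ⟨hk1, hk2⟩ := Finset.mem_Ioc.mp hk
      have hkk₀ : k₀ ≤ (k:ℝ) := by
        have : (m:ℝ) + 1 ≤ (k:ℝ) := by exact_mod_cast hk1
        linarith
      rcases le_or_gt ((k:ℝ)) (2*k₀) with h | h
      · exact (hLU k hkk₀ h).2
      · -- k > 2k₀ : use htail and the floor of 2k₀
        set b : ℕ := ⌊2*k₀⌋.toNat with hb
        set cc : ℕ := ⌈2*k₀⌉.toNat with hcc
        have h2pos : (0:ℝ) < 2*k₀ := by linarith
        have hbcast : (b : ℝ) = (⌊2*k₀⌋ : ℝ) := by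
          rw [hb]
          exact_mod_cast congrArg (fun z : ℤ => (z:ℝ))
            (Int.toNat_of_nonneg (Int.floor_nonneg.mpr (le_of_lt h2pos)))
        have hccast : (cc : ℝ) = (⌈2*k₀⌉ : ℝ) := by
          rw [hcc]
          exact_mod_cast congrArg (fun z : ℤ => (z:ℝ))
            (Int.toNat_of_nonneg (Int.ceil_nonneg (le_of_lt h2pos)))
        have hbk₀ : k₀ ≤ (b:ℝ) := by
          rw [hbcast]
          have : (2*k₀ : ℝ) - 1 < (⌊2*k₀⌋ : ℝ) := by
            have := Int.lt_floor_add_one (2*k₀); linarith [Int.sub_one_lt_floor (2*k₀)]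
          linarith
        have hb2k₀ : (b:ℝ) ≤ 2*k₀ := by rw [hbcast]; exact Int.floor_le _
        have hbcc : b ≤ cc := by
          have : (b:ℝ) ≤ (cc:ℝ) := by
            rw [hbcast, hccast]; exact_mod_cast Int.floor_le_ceil _
          exact_mod_cast this
        have hb1 : 1 ≤ b := by
          have : (1:ℝ) ≤ (b:ℝ) := by linarith
          exact_mod_cast this
        have hccn : cc ≤ n := by
          have : (cc:ℝ) ≤ (n:ℝ) := by
            rw [hccast]
            exact_mod_cast Int.ceil_le.mpr h2k₀
          exact_mod_cast this
        have h1 : d k ≤ d cc := htail k h hk2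
        have h2 : d cc ≤ d b := hdanti b cc hb1 hbcc hccn
        have h3 : d b ≤ U := (hLU b hbk₀ hb2k₀).2
        linarith
    have htailsum : ∑ k ∈ Finset.Ioc m n, S k * d k ≤ U * ∑ k ∈ Finset.Ioc m n, S k := by
      rw [Finset.mul_sum]
      refine Finset.sum_le_sum fun k hk => ?_
      obtain ⟨hk1, hk2⟩ := Finset.mem_Ioc.mp hk
      have hS := hSpos k (by omega) hk2
      nlinarith [htailU k hk]
    -- combine
    have hPs : 0 ≤ ∑ k ∈ Finset.Icc 1 m, S k :=
      Finset.sum_nonneg fun k hk => by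
        obtain ⟨h1, h2⟩ := Finset.mem_Icc.mp hk
        exact le_of_lt (hSpos k h1 (h2.trans hmn))
    have hRs : 0 ≤ ∑ k ∈ Finset.Ioc m n, S k :=
      Finset.sum_nonneg fun k hk => by
        obtain ⟨h1, h2⟩ := Finset.mem_Ioc.mp hk
        exact le_of_lt (hSpos k (by omega) h2)
    have hCmax : C ≤ max U C := le_max_right _ _
    have hUmax : U ≤ max U C := le_max_left _ _
    rw [hsplit2 (fun k => S k * d k), hsplit2 S]
    have := hcheb
    nlinarith [htailsum]
  done
end

section
/- The expected Sackin index of a uniformly random planted binary phylogenetic tree on n leaves equals 4^{n-1}·n!·(n-1)!/(2n-2)!. -/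
open Relation

/-- Planted binary phylogenetic trees on n labeled leaves, realized on the
vertex set Fin (2n) (a planted binary tree with n leaves has 2n vertices).
Since a leaf-labeled planted binary tree has no nontrivial automorphism, each
isomorphism class is represented here exactly (2n)! times, so a uniformly
random element of this type has the same Sackin-index distribution as a
uniformly random phylogenetic tree. -/
def PlantedTree (n : ℕ) : Type :=
  {T : PhyloNet (2*n) n // ∀ v, inDeg T.E v ≤ 1}

/-- The Sackin index: the sum over leaves of the depth, i.e. of the number of
ancestors (which in a tree equals the number of edges from the root). -/
noncomputable def treeSackin {n : ℕ} (T : PlantedTree n) : ℕ :=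
  ∑ i : Fin n, Nat.card {u : Fin (2*n) // Relation.TransGen T.1.E u (T.1.leaf i)}

/-! ### Auxiliary development -/

namespace Sackin19

open Relation Function
open scoped Classical

/-! #### Cardinality helpers -/

section CardHelpers

variable {α β : Type*} [Finite α] [Finite β]

lemma card_subtype_empty (p : α → Prop) (h : ∀ a, ¬ p a) :
    Nat.card {a // p a} = 0 := by
  have : IsEmpty {a // p a} := ⟨fun x => h x.1 x.2⟩
  exact Nat.card_of_isEmpty

lemma card_subtype_singleton (a0 : α) (p : α → Prop) (h : ∀ a, p a ↔ a = a0) :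
    Nat.card {a // p a} = 1 := by
  have : Nonempty {a // p a} := ⟨⟨a0, (h a0).2 rfl⟩⟩
  have : Subsingleton {a // p a} :=
    ⟨fun x y => Subtype.ext (((h x.1).1 x.2).trans (((h y.1).1 y.2)).symm)⟩
  exact Nat.card_unique

lemma card_option' {γ : Type*} [Finite γ] : Nat.card (Option γ) = Nat.card γ + 1 := by
  cases nonempty_fintype γ
  rw [Nat.card_eq_fintype_card, Nat.card_eq_fintype_card, Fintype.card_option]

lemma card_subtype_pair (a0 a1 : α) (h01 : a0 ≠ a1) (p : α → Prop)
    (h : ∀ a, p a ↔ a = a0 ∨ a = a1) :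
    Nat.card {a // p a} = 2 := by
  classical
  have e : {a // p a} ≃ Fin 2 :=
    { toFun := fun x => if x.1 = a0 then 0 else 1
      invFun := fun i => if i = 0 then ⟨a0, (h a0).2 (Or.inl rfl)⟩
        else ⟨a1, (h a1).2 (Or.inr rfl)⟩
      left_inv := by
        rintro ⟨a, ha⟩
        rcases (h a).1 ha with rfl | rfl
        · dsimp only; rw [if_pos rfl, if_pos rfl]
        · dsimp only; rw [if_neg (Ne.symm h01), if_neg (show (1 : Fin 2) ≠ 0 by decide)]
      right_inv := by
        intro i
        fin_cases i
        · simp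
        · simp [Ne.symm h01] }
  rw [Nat.card_congr e]; simp

lemma card_subtype_congr (f : α → β) (hf : Injective f) (p : α → Prop) (q : β → Prop)
    (h : ∀ b, q b ↔ ∃ a, p a ∧ f a = b) :
    Nat.card {b // q b} = Nat.card {a // p a} := by
  refine (Nat.card_eq_of_bijective (fun x : {a // p a} => (⟨f x.1, (h _).2 ⟨x.1, x.2, rfl⟩⟩ : {b // q b})) ⟨?_, ?_⟩).symm
  · intro x y hxy
    exact Subtype.ext (hf (congrArg Subtype.val hxy))
  · rintro ⟨b, hb⟩
    obtain ⟨a, ha, rfl⟩ := (h b).1 hb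
    exact ⟨⟨a, ha⟩, rfl⟩

lemma card_subtype_insert (f : α → β) (hf : Injective f) (p : α → Prop) (q : β → Prop)
    (b0 : β) (hb0 : ∀ a, p a → f a ≠ b0)
    (h : ∀ b, q b ↔ b = b0 ∨ ∃ a, p a ∧ f a = b) :
    Nat.card {b // q b} = Nat.card {a // p a} + 1 := by
  classical
  have e : {b // q b} ≃ Option {a // p a} :=
    { toFun := fun x => if hx : ∃ a, p a ∧ f a = x.1 then some ⟨hx.choose, hx.choose_spec.1⟩
        else none
      invFun := fun o => o.elim ⟨b0, (h b0).2 (Or.inl rfl)⟩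
        (fun y => ⟨f y.1, (h _).2 (Or.inr ⟨y.1, y.2, rfl⟩)⟩)
      left_inv := by
        rintro ⟨b, hb⟩
        rcases (h b).1 hb with rfl | hx
        · have hne : ¬ ∃ a, p a ∧ f a = b := by
            rintro ⟨a, ha, rfl⟩; exact hb0 a ha rfl
          dsimp only; rw [dif_neg hne]; rfl
        · have hx' : ∃ a, p a ∧ f a = b := hx
          dsimp only; rw [dif_pos hx']
          exact Subtype.ext hx'.choose_spec.2
      right_inv := by
        rintro (_ | ⟨a, ha⟩)
        · have : ¬ ∃ a', p a' ∧ f a' = b0 := by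
            rintro ⟨a', ha', hfa⟩; exact hb0 a' ha' hfa
          dsimp only [Option.elim]; rw [dif_neg this]
        · have hx' : ∃ a', p a' ∧ f a' = f a := ⟨a, ha, rfl⟩
          dsimp only [Option.elim]; rw [dif_pos hx']
          exact congrArg some (Subtype.ext (hf hx'.choose_spec.2)) }
  rw [Nat.card_congr e, card_option']

lemma subsingleton_of_card_le_one {γ : Type*} [Finite γ] (h : Nat.card γ ≤ 1) :
    Subsingleton γ := by
  cases nonempty_fintype γ
  rw [Nat.card_eq_fintype_card] at h
  exact Fintype.card_le_one_iff_subsingleton.mp h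

lemma nonempty_of_card_eq_one {γ : Type*} (h : Nat.card γ = 1) : Nonempty γ := by
  rcases Nat.card_eq_one_iff_exists.1 h with ⟨x, _⟩; exact ⟨x⟩

lemma nonempty_of_card_eq_two {γ : Type*} (h : Nat.card γ = 2) : Nonempty γ := by
  rcases Nat.card_eq_two_iff.1 h with ⟨x, _⟩; exact ⟨x⟩

end CardHelpers

/-! #### Finiteness of the type of networks -/

lemma phyloNet_inj (m n : ℕ) : Injective
    (fun N : PhyloNet m n => (N.E, N.root, N.leaf)) := by
  rintro ⟨E1, r1, l1, _, _, _, _, _, _, _, _⟩ ⟨E2, r2, l2, _, _, _, _, _, _, _, _⟩ h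
  simp only [Prod.mk.injEq] at h
  obtain ⟨h1, h2, h3⟩ := h
  cases h1; cases h2; cases h3; rfl

instance (m n : ℕ) : Finite (PhyloNet m n) :=
  Finite.of_injective _ (phyloNet_inj m n)

instance (n : ℕ) : Finite (PlantedTree n) :=
  Subtype.finite

lemma plantedTree_ext {n : ℕ} (T U : PlantedTree n)
    (hE : T.1.E = U.1.E) (hr : T.1.root = U.1.root) (hl : T.1.leaf = U.1.leaf) :
    T = U :=
  Subtype.ext (phyloNet_inj _ _ (by simp [hE, hr, hl]))


/-! #### Structural lemmas for planted trees -/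

section Structure

variable {n : ℕ}

lemma no_edge_into_root (T : PlantedTree n) (u : Fin (2*n)) : ¬ T.1.E u T.1.root := by
  intro h
  have h0 := T.1.root_in
  rw [inDeg] at h0
  exact Nat.card_ne_zero.2 ⟨⟨⟨u, h⟩⟩, inferInstance⟩ h0

lemma no_edge_from_leaf (T : PlantedTree n) (i : Fin n) (u : Fin (2*n)) :
    ¬ T.1.E (T.1.leaf i) u := by
  intro h
  have h0 := T.1.leaf_out i
  rw [outDeg] at h0
  exact Nat.card_ne_zero.2 ⟨⟨⟨u, h⟩⟩, inferInstance⟩ h0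

lemma edge_ne (T : PlantedTree n) {u v : Fin (2*n)} (h : T.1.E u v) : u ≠ v := by
  rintro rfl
  exact T.1.acyclic u (TransGen.single h)

lemma in_unique (T : PlantedTree n) {v u u' : Fin (2*n)}
    (h : T.1.E u v) (h' : T.1.E u' v) : u = u' := by
  have hs : Subsingleton {w // T.1.E w v} := subsingleton_of_card_le_one (T.2 v)
  exact congrArg Subtype.val (hs.elim ⟨u, h⟩ ⟨u', h'⟩)

lemma exists_edge_into (T : PlantedTree n) {v : Fin (2*n)} (hv : v ≠ T.1.root) :
    ∃ u, T.1.E u v := by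
  rcases (T.1.reach v).cases_tail with h | ⟨c, _, hc⟩
  · exact absurd h hv
  · exact ⟨c, hc⟩

lemma leaf_ne_root (T : PlantedTree n) (i : Fin n) : T.1.leaf i ≠ T.1.root := by
  intro h
  have h1 := T.1.leaf_in i
  rw [h, T.1.root_in] at h1
  exact absurd h1 (by decide)

open Classical in
/-- The parent of a vertex. -/
noncomputable def par (T : PlantedTree n) (v : Fin (2*n)) : Fin (2*n) :=
  if h : ∃ u, T.1.E u v then h.choose else v

lemma par_spec (T : PlantedTree n) {v : Fin (2*n)} (hv : v ≠ T.1.root) :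
    T.1.E (par T v) v := by
  have h : ∃ u, T.1.E u v := exists_edge_into T hv
  classical
  rw [par]
  simp only [dif_pos h]
  exact h.choose_spec

lemma par_eq (T : PlantedTree n) {u v : Fin (2*n)} (h : T.1.E u v) : par T v = u := by
  have hex : ∃ w, T.1.E w v := ⟨u, h⟩
  classical
  rw [par]
  simp only [dif_pos hex]
  exact in_unique T hex.choose_spec h

lemma edge_ne_root (T : PlantedTree n) {u v : Fin (2*n)} (h : T.1.E u v) :
    v ≠ T.1.root := by
  rintro rfl
  exact no_edge_into_root T u h

/-- Depth of a vertex: the number of strict ancestors. -/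
noncomputable def dep (T : PlantedTree n) (v : Fin (2*n)) : ℕ :=
  Nat.card {u : Fin (2*n) // TransGen T.1.E u v}

lemma dep_root (T : PlantedTree n) : dep T T.1.root = 0 := by
  refine card_subtype_empty _ (fun u h => ?_)
  rcases TransGen.tail'_iff.1 h with ⟨c, _, hc⟩
  exact no_edge_into_root T c hc

lemma anc_iff (T : PlantedTree n) {u v : Fin (2*n)} (h : T.1.E u v) (w : Fin (2*n)) :
    TransGen T.1.E w v ↔ w = u ∨ TransGen T.1.E w u := by
  constructor
  · intro hw
    rcases TransGen.tail'_iff.1 hw with ⟨c, hwc, hc⟩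
    have : c = u := in_unique T hc h
    subst this
    exact reflTransGen_iff_eq_or_transGen.1 hwc |>.imp Eq.symm id |>.imp id id
  · rintro (rfl | hw)
    · exact TransGen.single h
    · exact hw.tail h

lemma dep_edge (T : PlantedTree n) {u v : Fin (2*n)} (h : T.1.E u v) :
    dep T v = dep T u + 1 := by
  refine card_subtype_insert (f := id) injective_id
    (fun a => TransGen T.1.E a u) (fun a => TransGen T.1.E a v) u ?_ ?_
  · rintro a ha rfl
    exact T.1.acyclic _ ha
  · intro w
    show TransGen T.1.E w v ↔ _
    rw [anc_iff T h w]
    constructor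
    · rintro (rfl | hw)
      · exact Or.inl rfl
      · exact Or.inr ⟨w, hw, rfl⟩
    · rintro (rfl | ⟨a, ha, rfl⟩)
      · exact Or.inl rfl
      · exact Or.inr ha

lemma dep_par (T : PlantedTree n) {v : Fin (2*n)} (hv : v ≠ T.1.root) :
    dep T v = dep T (par T v) + 1 :=
  dep_edge T (par_spec T hv)

/-- A strictly increasing rank function certifies acyclicity. -/
lemma rank_acyclic {m : ℕ} (E : Fin m → Fin m → Prop) (ρ : Fin m → ℕ)
    (h : ∀ u v, E u v → ρ u < ρ v) (v : Fin m) : ¬ TransGen E v v := by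
  intro hv
  have key : ∀ a b : Fin m, TransGen E a b → ρ a < ρ b := by
    intro a b hab
    induction hab with
    | single h' => exact h _ _ h'
    | tail _ h' ih => exact lt_trans ih (h _ _ h')
  exact lt_irrefl _ (key v v hv)

lemma out_two (T : PlantedTree n) {v : Fin (2*n)} (hv : v ≠ T.1.root)
    (hl : ∀ i, T.1.leaf i ≠ v) : outDeg T.1.E v = 2 := by
  rcases T.1.internal v hv hl with ⟨_, h2⟩ | ⟨h1, _⟩
  · exact h2
  · have := T.2 v
    rw [h1] at this
    exact absurd this (by decide)

lemma out_unique_root (T : PlantedTree n) {c c' : Fin (2*n)}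
    (h : T.1.E T.1.root c) (h' : T.1.E T.1.root c') : c = c' := by
  have h1 := T.1.root_out
  rw [outDeg] at h1
  have hs : Subsingleton {w // T.1.E T.1.root w} :=
    subsingleton_of_card_le_one (le_of_eq h1)
  exact congrArg Subtype.val (hs.elim ⟨c, h⟩ ⟨c', h'⟩)

lemma root_wanc (T : PlantedTree n) (v : Fin (2*n)) :
    v = T.1.root ∨ TransGen T.1.E T.1.root v := by
  rcases reflTransGen_iff_eq_or_transGen.1 (T.1.reach v) with h | h
  · exact Or.inl h
  · exact Or.inr h

/-- Total path length: sum of depths of all vertices. -/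
noncomputable def phi (T : PlantedTree n) : ℕ := ∑ v : Fin (2*n), dep T v

lemma treeSackin_eq_sum_dep (T : PlantedTree n) :
    treeSackin T = ∑ i : Fin n, dep T (T.1.leaf i) := rfl

end Structure

lemma card_ind {α : Type*} [Fintype α] (p : α → Prop) [DecidablePred p] :
    Nat.card {x // p x} = ∑ x : α, if p x then 1 else 0 := by
  rw [Nat.card_eq_fintype_card, Fintype.card_subtype]
  exact Finset.card_filter _ _



/-! #### Insertion of a new leaf -/

section Insert

variable {n : ℕ}

/-- The embedding of old vertices into the enlarged vertex set, avoiding the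
two new positions `a` and `a.succAbove b`. -/
def emb (a : Fin (2*n+2)) (b : Fin (2*n+1)) (v : Fin (2*n)) : Fin (2*n+2) :=
  a.succAbove (b.succAbove v)

variable {a : Fin (2*n+2)} {b : Fin (2*n+1)}

lemma emb_inj : Injective (emb a b) := fun u v h =>
  Fin.succAbove_right_injective (Fin.succAbove_right_injective h)

lemma emb_ne_a (v : Fin (2*n)) : emb a b v ≠ a := Fin.succAbove_ne a _

lemma x_ne_a : a.succAbove b ≠ a := Fin.succAbove_ne a b

lemma emb_ne_x (v : Fin (2*n)) : emb a b v ≠ a.succAbove b := by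
  intro h
  exact Fin.succAbove_ne b v (Fin.succAbove_right_injective h)

lemma emb_trichotomy (y : Fin (2*n+2)) :
    y = a ∨ y = a.succAbove b ∨ ∃ v, emb a b v = y := by
  by_cases h1 : y = a
  · exact Or.inl h1
  by_cases h2 : y = a.succAbove b
  · exact Or.inr (Or.inl h2)
  obtain ⟨z, hz⟩ := Fin.exists_succAbove_eq h1
  have hzb : z ≠ b := by
    rintro rfl; exact h2 hz.symm
  obtain ⟨v, hv⟩ := Fin.exists_succAbove_eq hzb
  exact Or.inr (Or.inr ⟨v, by rw [emb, hv, hz]⟩)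

variable (T : PlantedTree n) (v0 : Fin (2*n))

/-- The edge relation of the tree obtained by subdividing the edge above `v0`
with new vertex `a` and attaching a new leaf at `a.succAbove b`. -/
def insE (a : Fin (2*n+2)) (b : Fin (2*n+1)) : Fin (2*n+2) → Fin (2*n+2) → Prop :=
  fun u' v' =>
    (∃ u v, T.1.E u v ∧ v ≠ v0 ∧ u' = emb a b u ∧ v' = emb a b v) ∨
    (u' = emb a b (par T v0) ∧ v' = a) ∨
    (u' = a ∧ v' = emb a b v0) ∨
    (u' = a ∧ v' = a.succAbove b)

variable {T v0}

lemma insE_in_emb {v : Fin (2*n)} (hv : v ≠ v0) (w : Fin (2*n+2)) :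
    insE T v0 a b w (emb a b v) ↔ ∃ u, T.1.E u v ∧ emb a b u = w := by
  constructor
  · rintro (⟨u, v', he, hne, rfl, hv'⟩ | ⟨_, hv'⟩ | ⟨_, hv'⟩ | ⟨_, hv'⟩)
    · exact ⟨u, by rw [emb_inj hv']; exact he, rfl⟩
    · exact absurd hv' (emb_ne_a v)
    · exact absurd (emb_inj hv') hv
    · exact absurd hv' (emb_ne_x v)
  · rintro ⟨u, he, rfl⟩
    exact Or.inl ⟨u, v, he, hv, rfl, rfl⟩

lemma insE_in_v0 (w : Fin (2*n+2)) :
    insE T v0 a b w (emb a b v0) ↔ w = a := by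
  constructor
  · rintro (⟨u, v', _, hne, rfl, hv'⟩ | ⟨_, hv'⟩ | ⟨rfl, _⟩ | ⟨rfl, _⟩)
    · exact absurd (emb_inj hv').symm hne
    · exact absurd hv' (emb_ne_a v0)
    · rfl
    · rfl
  · rintro rfl
    exact Or.inr (Or.inr (Or.inl ⟨rfl, rfl⟩))

lemma insE_in_a (w : Fin (2*n+2)) :
    insE T v0 a b w a ↔ w = emb a b (par T v0) := by
  constructor
  · rintro (⟨u, v', _, _, rfl, hv'⟩ | ⟨rfl, _⟩ | ⟨rfl, hv'⟩ | ⟨rfl, hv'⟩)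
    · exact absurd hv'.symm (emb_ne_a v')
    · rfl
    · exact absurd hv'.symm (emb_ne_a v0)
    · exact absurd hv'.symm x_ne_a
  · rintro rfl
    exact Or.inr (Or.inl ⟨rfl, rfl⟩)

lemma insE_in_x (w : Fin (2*n+2)) :
    insE T v0 a b w (a.succAbove b) ↔ w = a := by
  constructor
  · rintro (⟨u, v', _, _, rfl, hv'⟩ | ⟨_, hv'⟩ | ⟨rfl, hv'⟩ | ⟨rfl, _⟩)
    · exact absurd hv'.symm (emb_ne_x v')
    · exact absurd hv' x_ne_a
    · exact absurd hv'.symm (emb_ne_x v0)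
    · rfl
  · rintro rfl
    exact Or.inr (Or.inr (Or.inr ⟨rfl, rfl⟩))

lemma insE_out_emb (u : Fin (2*n)) (w : Fin (2*n+2)) :
    insE T v0 a b (emb a b u) w ↔
      (∃ v, T.1.E u v ∧ v ≠ v0 ∧ w = emb a b v) ∨ (u = par T v0 ∧ w = a) := by
  constructor
  · rintro (⟨u', v', he, hne, hu', rfl⟩ | ⟨hu', rfl⟩ | ⟨hu', _⟩ | ⟨hu', _⟩)
    · exact Or.inl ⟨v', by rw [emb_inj hu']; exact he, hne, rfl⟩
    · exact Or.inr ⟨emb_inj hu', rfl⟩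
    · exact absurd hu' (emb_ne_a u)
    · exact absurd hu' (emb_ne_a u)
  · rintro (⟨v, he, hne, rfl⟩ | ⟨rfl, rfl⟩)
    · exact Or.inl ⟨u, v, he, hne, rfl, rfl⟩
    · exact Or.inr (Or.inl ⟨rfl, rfl⟩)

lemma insE_out_a (w : Fin (2*n+2)) :
    insE T v0 a b a w ↔ w = emb a b v0 ∨ w = a.succAbove b := by
  constructor
  · rintro (⟨u', v', _, _, hu', rfl⟩ | ⟨hu', rfl⟩ | ⟨_, rfl⟩ | ⟨_, rfl⟩)
    · exact absurd hu'.symm (emb_ne_a u')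
    · exact absurd hu'.symm (emb_ne_a (par T v0))
    · exact Or.inl rfl
    · exact Or.inr rfl
  · rintro (rfl | rfl)
    · exact Or.inr (Or.inr (Or.inl ⟨rfl, rfl⟩))
    · exact Or.inr (Or.inr (Or.inr ⟨rfl, rfl⟩))

lemma insE_out_x (w : Fin (2*n+2)) :
    ¬ insE T v0 a b (a.succAbove b) w := by
  rintro (⟨u', v', _, _, hu', _⟩ | ⟨hu', _⟩ | ⟨hu', _⟩ | ⟨hu', _⟩)
  · exact (emb_ne_x u') hu'.symm
  · exact (emb_ne_x (par T v0)) hu'.symm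
  · exact x_ne_a hu'
  · exact x_ne_a hu'

variable (hv0 : v0 ≠ T.1.root)

/-- indegree of a non-root vertex in a planted tree is 1 -/
lemma inDeg_eq_one {v : Fin (2*n)} (hv : v ≠ T.1.root) : inDeg T.1.E v = 1 :=
  card_subtype_singleton (par T v) _
    (fun u => ⟨fun h => (par_eq T h).symm, fun h => h ▸ par_spec T hv⟩)

include hv0 in
lemma inDeg_ins_emb (v : Fin (2*n)) :
    inDeg (insE T v0 a b) (emb a b v) = inDeg T.1.E v := by
  by_cases hv : v = v0
  · subst hv
    rw [inDeg, inDeg_eq_one hv0]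
    exact card_subtype_singleton a _ (insE_in_v0)
  · exact card_subtype_congr (emb a b) emb_inj _ _
      (fun w => by rw [insE_in_emb hv w])

lemma inDeg_ins_a : inDeg (insE T v0 a b) a = 1 :=
  card_subtype_singleton (emb a b (par T v0)) _ insE_in_a

lemma inDeg_ins_x : inDeg (insE T v0 a b) (a.succAbove b) = 1 :=
  card_subtype_singleton a _ insE_in_x

include hv0 in
lemma outDeg_ins_emb (u : Fin (2*n)) :
    outDeg (insE T v0 a b) (emb a b u) = outDeg T.1.E u := by
  classical
  by_cases hu : u = par T v0
  · subst hu
    refine card_subtype_congr (fun v => if v = v0 then a else emb a b v)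
      ?_ (fun v => T.1.E (par T v0) v) _ ?_
    · intro v w h
      simp only at h
      by_cases hv : v = v0 <;> by_cases hw : w = v0
      · rw [hv, hw]
      · rw [if_pos hv, if_neg hw] at h; exact absurd h.symm (emb_ne_a w)
      · rw [if_neg hv, if_pos hw] at h; exact absurd h (emb_ne_a v)
      · rw [if_neg hv, if_neg hw] at h; exact emb_inj h
    · intro w
      rw [insE_out_emb]
      constructor
      · rintro (⟨v, he, hne, rfl⟩ | ⟨_, rfl⟩)
        · exact ⟨v, he, by beta_reduce; rw [if_neg hne]⟩
        · exact ⟨v0, par_spec T hv0, by beta_reduce; rw [if_pos rfl]⟩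
      · rintro ⟨v, he, rfl⟩
        beta_reduce
        by_cases hv : v = v0
        · subst hv; rw [if_pos rfl]; exact Or.inr ⟨rfl, rfl⟩
        · rw [if_neg hv]; exact Or.inl ⟨v, he, hv, rfl⟩
  · refine card_subtype_congr (emb a b) emb_inj (fun v => T.1.E u v) _ (fun w => ?_)
    rw [insE_out_emb]
    constructor
    · rintro (⟨v, he, hne, rfl⟩ | ⟨h, _⟩)
      · exact ⟨v, he, rfl⟩
      · exact absurd h hu
    · rintro ⟨v, he, rfl⟩
      refine Or.inl ⟨v, he, ?_, rfl⟩
      rintro rfl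
      exact hu (par_eq T he).symm

lemma outDeg_ins_a : outDeg (insE T v0 a b) a = 2 :=
  card_subtype_pair (emb a b v0) (a.succAbove b) (emb_ne_x v0) _ insE_out_a

lemma outDeg_ins_x : outDeg (insE T v0 a b) (a.succAbove b) = 0 :=
  card_subtype_empty _ insE_out_x

open Classical in
/-- Leaf labelling of the extended tree. -/
noncomputable def insLeaf (T : PlantedTree n) (a : Fin (2*n+2)) (b : Fin (2*n+1))
    (i : Fin (n+1)) : Fin (2*n+2) :=
  if h : i = Fin.last n then a.succAbove b else emb a b (T.1.leaf (i.castPred h))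

lemma insLeaf_last : insLeaf T a b (Fin.last n) = a.succAbove b := by
  classical
  rw [insLeaf]
  simp

lemma insLeaf_castSucc (j : Fin n) :
    insLeaf T a b j.castSucc = emb a b (T.1.leaf j) := by
  classical
  rw [insLeaf]
  simp only [dif_neg (Fin.ne_of_lt (Fin.castSucc_lt_last j)), Fin.castPred_castSucc]

lemma insLeaf_inj : Injective (insLeaf T a b) := by
  intro i j h
  by_cases hi : i = Fin.last n <;> by_cases hj : j = Fin.last n
  · rw [hi, hj]
  · rw [hi, insLeaf_last] at h
    rw [← Fin.castSucc_castPred j hj, insLeaf_castSucc] at h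
    exact absurd h.symm (emb_ne_x _)
  · rw [hj, insLeaf_last] at h
    rw [← Fin.castSucc_castPred i hi, insLeaf_castSucc] at h
    exact absurd h (emb_ne_x _)
  · rw [← Fin.castSucc_castPred i hi, insLeaf_castSucc] at h
    rw [← Fin.castSucc_castPred j hj, insLeaf_castSucc] at h
    rw [← Fin.castSucc_castPred i hi, ← Fin.castSucc_castPred j hj]
    rw [T.1.leaf_inj (emb_inj h)]

open Classical in
/-- A rank function for the extended tree. -/
noncomputable def insRank (T : PlantedTree n) (v0 : Fin (2*n)) (a : Fin (2*n+2))
    (b : Fin (2*n+1)) (y : Fin (2*n+2)) : ℕ :=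
  if y = a then 2 * dep T v0 + 1
  else if y = a.succAbove b then 2 * dep T v0 + 3
  else if h : ∃ v, emb a b v = y then 2 * dep T h.choose + 2 else 0

lemma insRank_a : insRank T v0 a b a = 2 * dep T v0 + 1 := by
  classical
  rw [insRank]; simp

lemma insRank_x : insRank T v0 a b (a.succAbove b) = 2 * dep T v0 + 3 := by
  classical
  rw [insRank, if_neg (x_ne_a (a := a) (b := b)), if_pos rfl]

lemma insRank_emb (v : Fin (2*n)) :
    insRank T v0 a b (emb a b v) = 2 * dep T v + 2 := by
  classical
  rw [insRank]
  have h : ∃ w, emb a b w = emb a b v := ⟨v, rfl⟩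
  simp only [if_neg (emb_ne_a (a := a) (b := b) v), if_neg (emb_ne_x (a := a) (b := b) v),
    dif_pos h]
  rw [emb_inj h.choose_spec]

include hv0 in
lemma insE_rank {u' v' : Fin (2*n+2)} (h : insE T v0 a b u' v') :
    insRank T v0 a b u' < insRank T v0 a b v' := by
  rcases h with ⟨u, v, he, _, rfl, rfl⟩ | ⟨rfl, rfl⟩ | ⟨rfl, rfl⟩ | ⟨rfl, rfl⟩
  · rw [insRank_emb, insRank_emb, dep_edge T he]
    omega
  · rw [insRank_emb, insRank_a, dep_par T hv0]
    omega
  · rw [insRank_a, insRank_emb]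
    omega
  · rw [insRank_a, insRank_x]
    omega

include hv0 in
lemma insE_lift {u v : Fin (2*n)} (h : T.1.E u v) :
    ReflTransGen (insE T v0 a b) (emb a b u) (emb a b v) := by
  by_cases hv : v = v0
  · rw [hv] at h ⊢
    rw [show u = par T v0 from (par_eq T h).symm]
    exact ReflTransGen.tail
      (ReflTransGen.single (Or.inr (Or.inl ⟨rfl, rfl⟩)))
      (Or.inr (Or.inr (Or.inl ⟨rfl, rfl⟩)))
  · exact ReflTransGen.single (Or.inl ⟨u, v, h, hv, rfl, rfl⟩)

include hv0 in
lemma ins_reach_emb (v : Fin (2*n)) :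
    ReflTransGen (insE T v0 a b) (emb a b T.1.root) (emb a b v) := by
  induction T.1.reach v with
  | refl => exact ReflTransGen.refl
  | tail _ e ih => exact ih.trans (insE_lift hv0 e)

/-- Insertion of a new leaf along the edge above `v0`, with positions `a`, `b`. -/
noncomputable def insTree (T : PlantedTree n) (v0 : Fin (2*n)) (hv0 : v0 ≠ T.1.root)
    (a : Fin (2*n+2)) (b : Fin (2*n+1)) : PlantedTree (n+1) :=
  ⟨{ E := insE T v0 a b
     root := emb a b T.1.root
     leaf := insLeaf T a b
     leaf_inj := insLeaf_inj
     acyclic := rank_acyclic _ (insRank T v0 a b) (fun _ _ h => insE_rank hv0 h)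
     reach := by
       intro v
       rcases emb_trichotomy (a := a) (b := b) v with rfl | rfl | ⟨w, rfl⟩
       · exact ReflTransGen.tail (ins_reach_emb hv0 (par T v0)) (Or.inr (Or.inl ⟨rfl, rfl⟩))
       · exact ReflTransGen.tail
           (ReflTransGen.tail (ins_reach_emb hv0 (par T v0)) (Or.inr (Or.inl ⟨rfl, rfl⟩)))
           (Or.inr (Or.inr (Or.inr ⟨rfl, rfl⟩)))
       · exact ins_reach_emb hv0 w
     root_in := by
       show inDeg (insE T v0 a b) (emb a b T.1.root) = 0
       rw [inDeg_ins_emb hv0, T.1.root_in]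
     root_out := by
       show outDeg (insE T v0 a b) (emb a b T.1.root) = 1
       rw [outDeg_ins_emb hv0, T.1.root_out]
     leaf_in := by
       intro i
       by_cases hi : i = Fin.last n
       · subst hi
         show inDeg (insE T v0 a b) (insLeaf T a b (Fin.last n)) = 1
         rw [insLeaf_last]
         exact inDeg_ins_x
       · show inDeg (insE T v0 a b) (insLeaf T a b i) = 1
         rw [← Fin.castSucc_castPred i hi, insLeaf_castSucc, inDeg_ins_emb hv0]
         exact T.1.leaf_in _
     leaf_out := by
       intro i
       by_cases hi : i = Fin.last n
       · subst hi
         show outDeg (insE T v0 a b) (insLeaf T a b (Fin.last n)) = 0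
         rw [insLeaf_last]
         exact outDeg_ins_x
       · show outDeg (insE T v0 a b) (insLeaf T a b i) = 0
         rw [← Fin.castSucc_castPred i hi, insLeaf_castSucc, outDeg_ins_emb hv0]
         exact T.1.leaf_out _
     internal := by
       intro v hroot hleaf
       rcases emb_trichotomy (a := a) (b := b) v with rfl | rfl | ⟨w, rfl⟩
       · exact Or.inl ⟨inDeg_ins_a, outDeg_ins_a⟩
       · exact absurd insLeaf_last (hleaf (Fin.last n))
       · have hw : w ≠ T.1.root := by
           rintro rfl; exact hroot rfl
         have hwl : ∀ i, T.1.leaf i ≠ w := by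
           intro i hi
           exact hleaf i.castSucc (by rw [insLeaf_castSucc, hi])
         rcases T.1.internal w hw hwl with ⟨h1, h2⟩ | ⟨h1, _⟩
         · refine Or.inl ⟨?_, ?_⟩
           · show inDeg (insE T v0 a b) (emb a b w) = 1
             rw [inDeg_ins_emb hv0, h1]
           · show outDeg (insE T v0 a b) (emb a b w) = 2
             rw [outDeg_ins_emb hv0, h2]
         · have := T.2 w
           rw [h1] at this
           exact absurd this (by decide) }, by
    intro v
    rcases emb_trichotomy (a := a) (b := b) v with rfl | rfl | ⟨w, rfl⟩
    · exact le_of_eq inDeg_ins_a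
    · exact le_of_eq inDeg_ins_x
    · show inDeg (insE T v0 a b) (emb a b w) ≤ 1
      rw [inDeg_ins_emb hv0]
      exact T.2 w⟩


lemma wanc_par {u v : Fin (2*n)} (h : T.1.E u v) (hvv0 : v ≠ v0) :
    (v0 = v ∨ TransGen T.1.E v0 v) ↔ (v0 = u ∨ TransGen T.1.E v0 u) := by
  constructor
  · rintro (rfl | hg)
    · exact absurd rfl hvv0.symm
    · rcases (anc_iff T h v0).1 hg with rfl | hg'
      · exact Or.inl rfl
      · exact Or.inr hg'
  · rintro (rfl | hg)
    · exact Or.inr (TransGen.single h)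
    · exact Or.inr (hg.tail h)

lemma wanc_not_par {u : Fin (2*n)} (h : T.1.E u v0) :
    ¬ (v0 = u ∨ TransGen T.1.E v0 u) := by
  rintro (rfl | hg)
  · exact T.1.acyclic v0 (TransGen.single h)
  · exact T.1.acyclic v0 (hg.tail h)

include hv0 in
lemma dep_ins_emb (v : Fin (2*n)) :
    dep (insTree T v0 hv0 a b) (emb a b v)
      = dep T v + (if v0 = v ∨ TransGen T.1.E v0 v then 1 else 0) := by
  classical
  suffices H : ∀ k v, dep T v = k → dep (insTree T v0 hv0 a b) (emb a b v)
      = dep T v + (if v0 = v ∨ TransGen T.1.E v0 v then 1 else 0) from H _ v rfl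
  intro k
  induction k using Nat.strong_induction_on with
  | _ k IH =>
    intro v hk
    by_cases hvr : v = T.1.root
    · subst hvr
      have h0 : dep (insTree T v0 hv0 a b) (emb a b T.1.root) = 0 :=
        dep_root (insTree T v0 hv0 a b)
      rw [h0, dep_root T, if_neg ?_]
      rintro (h | h)
      · exact hv0 h
      · rcases TransGen.tail'_iff.1 h with ⟨c, _, hc⟩
        exact no_edge_into_root T c hc
    · have he : T.1.E (par T v) v := par_spec T hvr
      have hlt : dep T (par T v) < k := by
        rw [← hk, dep_par T hvr]; omega
      by_cases hvv : v = v0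
      · have e1 : (insTree T v0 hv0 a b).1.E (emb a b (par T v0)) a :=
          Or.inr (Or.inl ⟨rfl, rfl⟩)
        have e2 : (insTree T v0 hv0 a b).1.E a (emb a b v0) :=
          Or.inr (Or.inr (Or.inl ⟨rfl, rfl⟩))
        subst hvv
        rw [dep_edge _ e2, dep_edge _ e1,
          IH _ hlt (par T v) rfl, if_neg (wanc_not_par he), if_pos (Or.inl rfl),
          dep_par T hvr]
      · have e : (insTree T v0 hv0 a b).1.E (emb a b (par T v)) (emb a b v) :=
          Or.inl ⟨par T v, v, he, hvv, rfl, rfl⟩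
        rw [dep_edge _ e, IH _ hlt (par T v) rfl, dep_par T hvr,
          if_congr (wanc_par he hvv) rfl rfl]
        omega

include hv0 in
lemma dep_ins_a :
    dep (insTree T v0 hv0 a b) a = dep T v0 := by
  classical
  have e1 : (insTree T v0 hv0 a b).1.E (emb a b (par T v0)) a :=
    Or.inr (Or.inl ⟨rfl, rfl⟩)
  rw [dep_edge _ e1, dep_ins_emb hv0, if_neg (wanc_not_par (par_spec T hv0)),
    dep_par T hv0]

include hv0 in
lemma dep_ins_x :
    dep (insTree T v0 hv0 a b) (a.succAbove b) = dep T v0 + 1 := by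
  have e : (insTree T v0 hv0 a b).1.E a (a.succAbove b) :=
    Or.inr (Or.inr (Or.inr ⟨rfl, rfl⟩))
  rw [dep_edge _ e, dep_ins_a hv0]

include hv0 in
lemma sackin_ins :
    treeSackin (insTree T v0 hv0 a b)
      = treeSackin T
        + Nat.card {i : Fin n // v0 = T.1.leaf i ∨ TransGen T.1.E v0 (T.1.leaf i)}
        + dep T v0 + 1 := by
  classical
  rw [treeSackin_eq_sum_dep, treeSackin_eq_sum_dep]
  rw [show (∑ i : Fin (n+1), dep (insTree T v0 hv0 a b) ((insTree T v0 hv0 a b).1.leaf i))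
      = (∑ i : Fin n, dep (insTree T v0 hv0 a b) (insLeaf T a b i.castSucc))
        + dep (insTree T v0 hv0 a b) (insLeaf T a b (Fin.last n)) from
      Fin.sum_univ_castSucc _]
  rw [insLeaf_last, dep_ins_x hv0, card_ind]
  have : ∀ i : Fin n, dep (insTree T v0 hv0 a b) (insLeaf T a b i.castSucc)
      = dep T (T.1.leaf i)
        + (if v0 = T.1.leaf i ∨ TransGen T.1.E v0 (T.1.leaf i) then 1 else 0) := by
    intro i
    rw [insLeaf_castSucc, dep_ins_emb hv0]
  rw [Finset.sum_congr rfl (fun i _ => this i), Finset.sum_add_distrib]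
  omega

include hv0 in
lemma phi_ins :
    phi (insTree T v0 hv0 a b)
      = phi T + Nat.card {u : Fin (2*n) // v0 = u ∨ TransGen T.1.E v0 u}
        + 2 * dep T v0 + 1 := by
  classical
  rw [phi]
  rw [show (∑ v : Fin (2*(n+1)), dep (insTree T v0 hv0 a b) v)
      = dep (insTree T v0 hv0 a b) a
        + ∑ z : Fin (2*n+1), dep (insTree T v0 hv0 a b) (a.succAbove z) from
      Fin.sum_univ_succAbove _ a]
  rw [show (∑ z : Fin (2*n+1), dep (insTree T v0 hv0 a b) (a.succAbove z))
      = dep (insTree T v0 hv0 a b) (a.succAbove b)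
        + ∑ v : Fin (2*n), dep (insTree T v0 hv0 a b) (a.succAbove (b.succAbove v)) from
      Fin.sum_univ_succAbove _ b]
  rw [dep_ins_a hv0, dep_ins_x hv0, card_ind]
  have : ∀ v : Fin (2*n), dep (insTree T v0 hv0 a b) (a.succAbove (b.succAbove v))
      = dep T v + (if v0 = v ∨ TransGen T.1.E v0 v then 1 else 0) := by
    intro v
    exact dep_ins_emb hv0 v
  rw [Finset.sum_congr rfl (fun v _ => this v), Finset.sum_add_distrib, phi]
  omega


end Insert

/-! #### Deleting the last leaf -/

section Delete

variable {n : ℕ}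

/-- The last leaf, to be deleted. -/
noncomputable def dx (U : PlantedTree (n+1)) : Fin (2*n+2) := U.1.leaf (Fin.last n)

/-- Parent of the last leaf. -/
noncomputable def da (U : PlantedTree (n+1)) : Fin (2*n+2) := par U (dx U)

variable (U : PlantedTree (n+1))

lemma dF1 : U.1.E (da U) (dx U) := par_spec U (leaf_ne_root U (Fin.last n))

lemma dx_ne_root : dx U ≠ U.1.root := leaf_ne_root U (Fin.last n)

lemma da_ne_dx : da U ≠ dx U := edge_ne U (dF1 U)

lemma da_not_leaf : ∀ i, U.1.leaf i ≠ da U := by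
  intro i h
  exact no_edge_from_leaf U i (dx U) (h ▸ dF1 U)

lemma dleaf_ne : ∀ i : Fin n, U.1.leaf i.castSucc ≠ dx U := by
  intro i h
  exact absurd (U.1.leaf_inj h) (Fin.ne_of_lt (Fin.castSucc_lt_last i))

lemma da_ne_root (hn : 0 < n) : da U ≠ U.1.root := by
  intro h
  have hx : U.1.E U.1.root (dx U) := h ▸ dF1 U
  have h0 : (0 : Fin (n+1)) ≠ Fin.last n := by
    intro h0
    have := congrArg Fin.val h0
    simp [Fin.last] at this
    omega
  have hl0 : U.1.leaf 0 ≠ dx U := fun hh => h0 (U.1.leaf_inj hh)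
  have hl0r : U.1.leaf 0 ≠ U.1.root := leaf_ne_root U 0
  rcases (U.1.reach (U.1.leaf 0)).cases_head with h1 | ⟨c, hc, hc2⟩
  · exact hl0r h1.symm
  · have hcx : c = dx U := out_unique_root U hc hx
    subst hcx
    rcases hc2.cases_head with h2 | ⟨e, he, _⟩
    · exact hl0 h2.symm
    · exact no_edge_from_leaf U (Fin.last n) e he

lemma da_deg (hn : 0 < n) : inDeg U.1.E (da U) = 1 ∧ outDeg U.1.E (da U) = 2 := by
  rcases U.1.internal (da U) (da_ne_root U hn) (da_not_leaf U) with h | ⟨h1, _⟩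
  · exact h
  · have := U.2 (da U)
    rw [h1] at this
    exact absurd this (by decide)

/-- The second child of the parent of the last leaf. -/
noncomputable def dv0' : Fin (2*n+2) :=
  if h : ∃ w, U.1.E (da U) w ∧ w ≠ dx U then h.choose else U.1.root

lemma dv0'_spec (hn : 0 < n) : U.1.E (da U) (dv0' U) ∧ dv0' U ≠ dx U := by
  have h2 := (da_deg U hn).2
  rw [outDeg] at h2
  have := (Nat.card_eq_two_iff' (⟨dx U, dF1 U⟩ : {w // U.1.E (da U) w})).1 h2
  obtain ⟨y, hy, _⟩ := this
  have hex : ∃ w, U.1.E (da U) w ∧ w ≠ dx U :=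
    ⟨y.1, y.2, fun hc => hy (Subtype.ext hc)⟩
  rw [dv0']
  simp only [dif_pos hex]
  exact hex.choose_spec

lemma children_da (hn : 0 < n) : ∀ w, U.1.E (da U) w ↔ w = dx U ∨ w = dv0' U := by
  have h2 := (da_deg U hn).2
  rw [outDeg] at h2
  have hu := (Nat.card_eq_two_iff' (⟨dx U, dF1 U⟩ : {w // U.1.E (da U) w})).1 h2
  obtain ⟨y, hy, hyu⟩ := hu
  intro w
  constructor
  · intro hw
    by_cases hwx : w = dx U
    · exact Or.inl hwx
    · have h1 : (⟨w, hw⟩ : {w // U.1.E (da U) w}) = y :=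
        hyu ⟨w, hw⟩ (fun hc => hwx (congrArg Subtype.val hc))
      have hy' : U.1.E (da U) (dv0' U) ∧ dv0' U ≠ dx U := dv0'_spec U hn
      have hv : (⟨dv0' U, hy'.1⟩ : {w // U.1.E (da U) w}) = y :=
        hyu _ (fun hc => hy'.2 (congrArg Subtype.val hc))
      rw [show w = y.1 from congrArg Subtype.val h1, ← congrArg Subtype.val hv]
      exact Or.inr rfl
  · rintro (rfl | rfl)
    · exact dF1 U
    · exact (dv0'_spec U hn).1

/-- Parent of the parent of the last leaf. -/
noncomputable def dp : Fin (2*n+2) := par U (da U)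

lemma dF6 (hn : 0 < n) : U.1.E (dp U) (da U) := par_spec U (da_ne_root U hn)

lemma dv0'_ne_root (hn : 0 < n) : dv0' U ≠ U.1.root := edge_ne_root U (dv0'_spec U hn).1

lemma dv0'_ne_da (hn : 0 < n) : dv0' U ≠ da U := (edge_ne U (dv0'_spec U hn).1).symm

lemma dp_ne_da (hn : 0 < n) : dp U ≠ da U := edge_ne U (dF6 U hn)

lemma dp_ne_dx (hn : 0 < n) : dp U ≠ dx U := by
  intro h
  have h6 := dF6 U hn
  rw [h] at h6
  exact no_edge_from_leaf U (Fin.last n) (da U) h6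

lemma not_dp_dv0' (hn : 0 < n) : ¬ U.1.E (dp U) (dv0' U) := by
  intro h
  exact (dp_ne_da U hn) (in_unique U h (dv0'_spec U hn).1)

/-- The position index of the deleted leaf relative to its parent. -/
noncomputable def db : Fin (2*n+1) :=
  if h : ∃ z : Fin (2*n+1), (da U).succAbove z = dx U then h.choose
  else ⟨0, Nat.succ_pos _⟩

lemma dx_eq : (da U).succAbove (db U) = dx U := by
  have h : ∃ z : Fin (2*n+1), (da U).succAbove z = dx U :=
    Fin.exists_succAbove_eq (Ne.symm (da_ne_dx U))
  rw [db]
  simp only [dif_pos h]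
  exact h.choose_spec

/-- Embedding of the reduced vertex set. -/
noncomputable def dEmb (v : Fin (2*n)) : Fin (2*n+2) := emb (da U) (db U) v

lemma dEmb_ne_da (v : Fin (2*n)) : dEmb U v ≠ da U := emb_ne_a v

lemma dEmb_ne_dx (v : Fin (2*n)) : dEmb U v ≠ dx U := by
  rw [← dx_eq U]
  exact emb_ne_x v

lemma dEmb_inj : Injective (dEmb U) := emb_inj

lemma dinv_aux (hn : 0 < n) (y : Fin (2*n+2)) (h1 : y ≠ da U) (h2 : y ≠ dx U) :
    ∃ v, dEmb U v = y := by
  rcases emb_trichotomy (a := da U) (b := db U) y with rfl | hy | ⟨v, hv⟩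
  · exact absurd rfl h1
  · rw [dx_eq U] at hy
    exact absurd hy h2
  · exact ⟨v, hv⟩

open Classical in
/-- Partial inverse of the embedding. -/
noncomputable def dinv (hn : 0 < n) (y : Fin (2*n+2)) : Fin (2*n) :=
  if h : ∃ v, dEmb U v = y then h.choose else ⟨0, by omega⟩

lemma dinv_dEmb (hn : 0 < n) (v : Fin (2*n)) : dinv U hn (dEmb U v) = v := by
  classical
  have h : ∃ w, dEmb U w = dEmb U v := ⟨v, rfl⟩
  rw [dinv]
  simp only [dif_pos h]
  exact dEmb_inj U h.choose_spec

lemma dEmb_dinv (hn : 0 < n) (y : Fin (2*n+2)) (h1 : y ≠ da U) (h2 : y ≠ dx U) :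
    dEmb U (dinv U hn y) = y := by
  classical
  have h : ∃ v, dEmb U v = y := dinv_aux U hn y h1 h2
  rw [dinv]
  simp only [dif_pos h]
  exact h.choose_spec

/-- Edge relation of the reduced tree. -/
noncomputable def dE : Fin (2*n) → Fin (2*n) → Prop :=
  fun u v => U.1.E (dEmb U u) (dEmb U v) ∨ (dEmb U u = dp U ∧ dEmb U v = dv0' U)

/-- Root of the reduced tree. -/
noncomputable def droot (hn : 0 < n) : Fin (2*n) := dinv U hn U.1.root

/-- Leaves of the reduced tree. -/
noncomputable def dleaf (hn : 0 < n) (i : Fin n) : Fin (2*n) :=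
  dinv U hn (U.1.leaf i.castSucc)

lemma dEmb_droot (hn : 0 < n) : dEmb U (droot U hn) = U.1.root :=
  dEmb_dinv U hn _ (Ne.symm (da_ne_root U hn)) (Ne.symm (dx_ne_root U))

lemma dEmb_dleaf (hn : 0 < n) (i : Fin n) :
    dEmb U (dleaf U hn i) = U.1.leaf i.castSucc :=
  dEmb_dinv U hn _ (da_not_leaf U _) (dleaf_ne U i)

lemma dEmb_dp (hn : 0 < n) : dEmb U (dinv U hn (dp U)) = dp U :=
  dEmb_dinv U hn _ (dp_ne_da U hn) (dp_ne_dx U hn)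

lemma inDeg_dE (hn : 0 < n) (v : Fin (2*n)) :
    inDeg (dE U) v = inDeg U.1.E (dEmb U v) := by
  by_cases hv : dEmb U v = dv0' U
  · rw [hv, inDeg_eq_one (T := U) (dv0'_ne_root U hn)]
    refine card_subtype_singleton (dinv U hn (dp U)) _ (fun w => ?_)
    constructor
    · rintro (he | ⟨hw, _⟩)
      · rw [hv] at he
        exact absurd (in_unique U he (dv0'_spec U hn).1) (dEmb_ne_da U w)
      · rw [← dinv_dEmb U hn w, hw]
    · rintro rfl
      exact Or.inr ⟨dEmb_dp U hn, hv⟩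
  · refine (card_subtype_congr (dEmb U) (dEmb_inj U) (fun w => dE U w v)
      (fun w' => U.1.E w' (dEmb U v)) (fun w' => ?_)).symm
    constructor
    · intro he
      have hwx : w' ≠ dx U := by
        rintro rfl
        exact no_edge_from_leaf U (Fin.last n) _ he
      have hwa : w' ≠ da U := by
        rintro rfl
        rcases (children_da U hn _).1 he with h | h
        · exact dEmb_ne_dx U v h
        · exact hv h
      refine ⟨dinv U hn w', Or.inl ?_, dEmb_dinv U hn w' hwa hwx⟩
      rw [dEmb_dinv U hn w' hwa hwx]
      exact he
    · rintro ⟨w, hw | ⟨_, h2⟩, rfl⟩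
      · exact hw
      · exact absurd h2 hv

lemma outDeg_dE (hn : 0 < n) (u : Fin (2*n)) :
    outDeg (dE U) u = outDeg U.1.E (dEmb U u) := by
  by_cases hu : dEmb U u = dp U
  · refine (card_subtype_congr
      (fun w => if dEmb U w = dv0' U then da U else dEmb U w) ?_
      (fun w => dE U u w) (fun w' => U.1.E (dEmb U u) w') (fun w' => ?_)).symm
    · intro w w2 h
      dsimp only at h
      by_cases h1 : dEmb U w = dv0' U <;> by_cases h2 : dEmb U w2 = dv0' U
      · rw [if_pos h1, if_pos h2] at h
        exact dEmb_inj U (h1.trans h2.symm)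
      · rw [if_pos h1, if_neg h2] at h
        exact absurd h.symm (dEmb_ne_da U w2)
      · rw [if_neg h1, if_pos h2] at h
        exact absurd h (dEmb_ne_da U w)
      · rw [if_neg h1, if_neg h2] at h
        exact dEmb_inj U h
    · rw [hu]
      constructor
      · intro he
        by_cases hw : w' = da U
        · subst hw
          refine ⟨dinv U hn (dv0' U), Or.inr ⟨hu, ?_⟩, ?_⟩
          · exact dEmb_dinv U hn _ (dv0'_ne_da U hn) (dv0'_spec U hn).2
          · beta_reduce
            rw [if_pos (dEmb_dinv U hn _ (dv0'_ne_da U hn) (dv0'_spec U hn).2)]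
        · have hwx : w' ≠ dx U := by
            rintro rfl
            exact dp_ne_da U hn (in_unique U he (dF1 U))
          have hne : w' ≠ dv0' U := by
            rintro rfl
            exact not_dp_dv0' U hn he
          refine ⟨dinv U hn w', Or.inl ?_, ?_⟩
          · rw [hu, dEmb_dinv U hn w' hw hwx]
            exact he
          · beta_reduce
            rw [dEmb_dinv U hn w' hw hwx, if_neg hne]
      · rintro ⟨w, hw | ⟨_, h2⟩, rfl⟩
        · have hne : dEmb U w ≠ dv0' U := by
            rintro h2
            rw [hu, h2] at hw
            exact not_dp_dv0' U hn hw
          beta_reduce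
          rw [if_neg hne]
          rw [hu] at hw
          exact hw
        · beta_reduce
          rw [if_pos h2]
          exact dF6 U hn
  · refine (card_subtype_congr (dEmb U) (dEmb_inj U) (fun w => dE U u w)
      (fun w' => U.1.E (dEmb U u) w') (fun w' => ?_)).symm
    constructor
    · intro he
      have hwa : w' ≠ da U := by
        rintro rfl
        exact hu (in_unique U he (dF6 U hn))
      have hwx : w' ≠ dx U := by
        rintro rfl
        exact dEmb_ne_da U u (in_unique U he (dF1 U))
      refine ⟨dinv U hn w', Or.inl ?_, dEmb_dinv U hn w' hwa hwx⟩
      rw [dEmb_dinv U hn w' hwa hwx]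
      exact he
    · rintro ⟨w, hw | ⟨h1, _⟩, rfl⟩
      · exact hw
      · exact absurd h1 hu

lemma dE_rank (hn : 0 < n) {u v : Fin (2*n)} (h : dE U u v) :
    dep U (dEmb U u) < dep U (dEmb U v) := by
  rcases h with he | ⟨h1, h2⟩
  · rw [dep_edge U he]
    omega
  · rw [h1, h2, dep_edge U (dv0'_spec U hn).1, dep_edge U (dF6 U hn)]
    omega

lemma dE_reach (hn : 0 < n) (v : Fin (2*n)) :
    ReflTransGen (dE U) (droot U hn) v := by
  suffices H : ∀ k v, dep U (dEmb U v) = k → ReflTransGen (dE U) (droot U hn) v from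
    H _ v rfl
  intro k
  induction k using Nat.strong_induction_on with
  | _ k IH =>
    intro v hk
    by_cases hvr : dEmb U v = U.1.root
    · have : v = droot U hn := by
        rw [← dinv_dEmb U hn v, hvr]
        rfl
      rw [this]
    · have he : U.1.E (par U (dEmb U v)) (dEmb U v) := par_spec U hvr
      by_cases hq : par U (dEmb U v) = da U
      · rw [hq] at he
        have h2 : dEmb U v = dv0' U := by
          rcases (children_da U hn _).1 he with h | h
          · exact absurd h (dEmb_ne_dx U v)
          · exact h
        have hedge : dE U (dinv U hn (dp U)) v := Or.inr ⟨dEmb_dp U hn, h2⟩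
        have hlt : dep U (dEmb U (dinv U hn (dp U))) < k := by
          rw [← hk, dEmb_dp U hn, h2, dep_edge U (dv0'_spec U hn).1,
            dep_edge U (dF6 U hn)]
          omega
        exact (IH _ hlt _ rfl).tail hedge
      · have hqx : par U (dEmb U v) ≠ dx U := by
          intro h
          rw [h] at he
          exact no_edge_from_leaf U (Fin.last n) _ he
        have hedge : dE U (dinv U hn (par U (dEmb U v))) v := by
          refine Or.inl ?_
          rw [dEmb_dinv U hn _ hq hqx]
          exact he
        have hlt : dep U (dEmb U (dinv U hn (par U (dEmb U v)))) < k := by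
          rw [← hk, dEmb_dinv U hn _ hq hqx, dep_edge U he]
          omega
        exact (IH _ hlt _ rfl).tail hedge

/-- The reduced tree, obtained by deleting the last leaf and its parent. -/
noncomputable def delTree (hn : 0 < n) : PlantedTree n :=
  ⟨{ E := dE U
     root := droot U hn
     leaf := dleaf U hn
     leaf_inj := by
       intro i j h
       have := congrArg (dEmb U) h
       rw [dEmb_dleaf U hn, dEmb_dleaf U hn] at this
       exact Fin.castSucc_injective n (U.1.leaf_inj this)
     acyclic := rank_acyclic _ (fun v => dep U (dEmb U v)) (fun _ _ h => dE_rank U hn h)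
     reach := dE_reach U hn
     root_in := by
       show inDeg (dE U) (droot U hn) = 0
       rw [inDeg_dE U hn, dEmb_droot U hn, U.1.root_in]
     root_out := by
       show outDeg (dE U) (droot U hn) = 1
       rw [outDeg_dE U hn, dEmb_droot U hn, U.1.root_out]
     leaf_in := by
       intro i
       show inDeg (dE U) (dleaf U hn i) = 1
       rw [inDeg_dE U hn, dEmb_dleaf U hn, U.1.leaf_in]
     leaf_out := by
       intro i
       show outDeg (dE U) (dleaf U hn i) = 0
       rw [outDeg_dE U hn, dEmb_dleaf U hn, U.1.leaf_out]
     internal := by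
       intro v hroot hleaf
       have h1 : dEmb U v ≠ U.1.root := by
         intro h
         apply hroot
         rw [← dinv_dEmb U hn v, h]
         rfl
       have h2 : ∀ j, U.1.leaf j ≠ dEmb U v := by
         intro j hj
         by_cases hjl : j = Fin.last n
         · subst hjl
           exact dEmb_ne_dx U v hj.symm
         · rw [← Fin.castSucc_castPred j hjl] at hj
           apply hleaf (j.castPred hjl)
           rw [← dinv_dEmb U hn v, ← hj]
           rfl
       rcases U.1.internal (dEmb U v) h1 h2 with ⟨ha, hb⟩ | ⟨ha, _⟩
       · refine Or.inl ⟨?_, ?_⟩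
         · show inDeg (dE U) v = 1
           rw [inDeg_dE U hn, ha]
         · show outDeg (dE U) v = 2
           rw [outDeg_dE U hn, hb]
       · have := U.2 (dEmb U v)
         rw [ha] at this
         exact absurd this (by decide) }, by
    intro v
    show inDeg (dE U) v ≤ 1
    rw [inDeg_dE U hn]
    exact U.2 _⟩

/-- The distinguished vertex of the reduced tree. -/
noncomputable def dv0 (hn : 0 < n) : Fin (2*n) := dinv U hn (dv0' U)

lemma dEmb_dv0 (hn : 0 < n) : dEmb U (dv0 U hn) = dv0' U :=
  dEmb_dinv U hn _ (dv0'_ne_da U hn) (dv0'_spec U hn).2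

lemma dv0_ne_droot (hn : 0 < n) : dv0 U hn ≠ (delTree U hn).1.root := by
  intro h
  have := congrArg (dEmb U) h
  rw [dEmb_dv0 U hn, show (delTree U hn).1.root = droot U hn from rfl,
    dEmb_droot U hn] at this
  exact dv0'_ne_root U hn this

lemma par_delTree (hn : 0 < n) :
    par (delTree U hn) (dv0 U hn) = dinv U hn (dp U) := by
  refine par_eq (delTree U hn) ?_
  show dE U (dinv U hn (dp U)) (dv0 U hn)
  exact Or.inr ⟨dEmb_dp U hn, dEmb_dv0 U hn⟩


lemma ins_delTree (hn : 0 < n) :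
    insTree (delTree U hn) (dv0 U hn) (dv0_ne_droot U hn) (da U) (db U) = U := by
  refine plantedTree_ext _ _ ?_ ?_ ?_
  · -- edge relations agree
    funext u' v'
    refine propext ⟨?_, ?_⟩
    · rintro (⟨u, v, huv, hv, rfl, rfl⟩ | ⟨h1, rfl⟩ | ⟨rfl, rfl⟩ | ⟨rfl, rfl⟩)
      · rcases huv with he | ⟨_, h2⟩
        · exact he
        · exfalso
          apply hv
          rw [← dinv_dEmb U hn v, h2]
          rfl
      · show U.1.E u' (da U)
        rw [show u' = emb (da U) (db U) (par (delTree U hn) (dv0 U hn)) from h1,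
          par_delTree U hn]
        show U.1.E (dEmb U (dinv U hn (dp U))) (da U)
        rw [dEmb_dp U hn]
        exact dF6 U hn
      · show U.1.E (da U) (dEmb U (dv0 U hn))
        rw [dEmb_dv0 U hn]
        exact (dv0'_spec U hn).1
      · show U.1.E (da U) ((da U).succAbove (db U))
        rw [dx_eq U]
        exact dF1 U
    · intro he
      rcases emb_trichotomy (a := da U) (b := db U) v' with rfl | hx | ⟨v, rfl⟩
      · -- v' = da
        refine Or.inr (Or.inl ⟨?_, rfl⟩)
        rw [par_delTree U hn]
        show u' = dEmb U (dinv U hn (dp U))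
        rw [dEmb_dp U hn]
        exact in_unique U he (dF6 U hn)
      · -- v' = dx
        rw [dx_eq U] at hx
        subst hx
        refine Or.inr (Or.inr (Or.inr ⟨in_unique U he (dF1 U), (dx_eq U).symm⟩))
      · -- v' = dEmb v
        have hux : u' ≠ dx U := by
          rintro rfl
          exact no_edge_from_leaf U (Fin.last n) _ he
        by_cases hua : u' = da U
        · subst hua
          have h2 : dEmb U v = dv0' U := by
            rcases (children_da U hn _).1 he with h | h
            · exact absurd h (dEmb_ne_dx U v)
            · exact h
          refine Or.inr (Or.inr (Or.inl ⟨rfl, ?_⟩))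
          show emb (da U) (db U) v = emb (da U) (db U) (dv0 U hn)
          show dEmb U v = dEmb U (dv0 U hn)
          rw [dEmb_dv0 U hn, h2]
        · obtain ⟨u, rfl⟩ := dinv_aux U hn u' hua hux
          have hvv0 : v ≠ dv0 U hn := by
            rintro rfl
            have h3 : U.1.E (dEmb U u) (dv0' U) := by
              rw [← dEmb_dv0 U hn]
              exact he
            exact dEmb_ne_da U u (in_unique U h3 (dv0'_spec U hn).1)
          exact Or.inl ⟨u, v, Or.inl he, hvv0, rfl, rfl⟩
  · -- roots agree
    show emb (da U) (db U) (droot U hn) = U.1.root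
    exact dEmb_droot U hn
  · -- leaves agree
    funext i
    show insLeaf (delTree U hn) (da U) (db U) i = U.1.leaf i
    by_cases hi : i = Fin.last n
    · subst hi
      rw [insLeaf_last, dx_eq U]
      rfl
    · rw [← Fin.castSucc_castPred i hi, insLeaf_castSucc]
      show dEmb U (dleaf U hn (i.castPred hi)) = _
      rw [dEmb_dleaf U hn]


end Delete


/-! #### Injectivity of insertion -/

section Inj

variable {n : ℕ} {a : Fin (2*n+2)} {b : Fin (2*n+1)}

lemma edge_of_insE_eq {T T' : PlantedTree n} {v0 : Fin (2*n)}
    (hv0 : v0 ≠ T.1.root) (hv0' : v0 ≠ T'.1.root)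
    (hE : insE T v0 a b = insE T' v0 a b) {u v : Fin (2*n)} (he : T.1.E u v) :
    T'.1.E u v := by
  by_cases hv : v = v0
  · subst hv
    have e2 : insE T v a b (emb a b u) a :=
      Or.inr (Or.inl ⟨by rw [par_eq T he], rfl⟩)
    rw [hE] at e2
    have := (insE_in_a (T := T') (v0 := v) (emb a b u)).1 e2
    have hu : u = par T' v := emb_inj this
    rw [hu]
    exact par_spec T' hv0'
  · have e1 : insE T v0 a b (emb a b u) (emb a b v) := Or.inl ⟨u, v, he, hv, rfl, rfl⟩
    rw [hE] at e1
    obtain ⟨u'', he'', hemb⟩ := (insE_in_emb (T := T') hv (emb a b u)).1 e1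
    rw [← emb_inj hemb]
    exact he''

lemma insTree_inj {T T' : PlantedTree n} {v0 v0' : Fin (2*n)}
    {hv0 : v0 ≠ T.1.root} {hv0' : v0' ≠ T'.1.root}
    {a a' : Fin (2*n+2)} {b b' : Fin (2*n+1)}
    (h : insTree T v0 hv0 a b = insTree T' v0' hv0' a' b') :
    T = T' ∧ v0 = v0' ∧ a = a' ∧ b = b' := by
  have hE : insE T v0 a b = insE T' v0' a' b' := congrArg (fun W => W.1.E) h
  have hroot : emb a b T.1.root = emb a' b' T'.1.root := congrArg (fun W => W.1.root) h
  have hleaf : insLeaf T a b = insLeaf T' a' b' := congrArg (fun W => W.1.leaf) h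
  have hx : a.succAbove b = a'.succAbove b' := by
    have := congrFun hleaf (Fin.last n)
    rwa [insLeaf_last, insLeaf_last] at this
  have ha : a = a' := by
    have e : insE T v0 a b a (a.succAbove b) := Or.inr (Or.inr (Or.inr ⟨rfl, rfl⟩))
    rw [hE, hx] at e
    exact (insE_in_x _).1 e
  subst ha
  have hb : b = b' := Fin.succAbove_right_injective hx
  subst hb
  have hv : v0 = v0' := by
    have e3 : insE T v0 a b a (emb a b v0) := Or.inr (Or.inr (Or.inl ⟨rfl, rfl⟩))
    rw [hE] at e3
    rcases (insE_out_a (T := T') (v0 := v0') _).1 e3 with h1 | h1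
    · exact emb_inj h1
    · exact absurd h1 (emb_ne_x v0)
  subst hv
  have hr : T.1.root = T'.1.root := emb_inj hroot
  have hl : T.1.leaf = T'.1.leaf := by
    funext i
    have := congrFun hleaf i.castSucc
    rw [insLeaf_castSucc, insLeaf_castSucc] at this
    exact emb_inj this
  refine ⟨?_, rfl, rfl, rfl⟩
  refine plantedTree_ext _ _ ?_ hr hl
  funext u v
  exact propext ⟨fun he => edge_of_insE_eq hv0 hv0' hE he,
    fun he => edge_of_insE_eq hv0' hv0 hE.symm he⟩

end Inj

/-! #### The bijection and the recursion -/

section Recursion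

variable {m : ℕ}

/-- Insertion, with the subdivided edge encoded by an index. -/
noncomputable def ins2
    (q : PlantedTree (m+1) × Fin (2*m+1) × Fin (2*(m+1)+2) × Fin (2*(m+1)+1)) :
    PlantedTree (m+2) :=
  insTree q.1 (q.1.1.root.succAbove q.2.1) (Fin.succAbove_ne _ _) q.2.2.1 q.2.2.2

lemma insTree_proof_irrel {n : ℕ} {T : PlantedTree n} {v0 v0' : Fin (2*n)}
    (h : v0 = v0') (h1 : v0 ≠ T.1.root) (h2 : v0' ≠ T.1.root)
    (a : Fin (2*n+2)) (b : Fin (2*n+1)) :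
    insTree T v0 h1 a b = insTree T v0' h2 a b := by
  subst h
  rfl

lemma ins2_bijective : Bijective (ins2 (m := m)) := by
  constructor
  · rintro ⟨T, z, a, b⟩ ⟨T', z', a', b'⟩ h
    have h' : insTree T (T.1.root.succAbove z) (Fin.succAbove_ne _ _) a b
        = insTree T' (T'.1.root.succAbove z') (Fin.succAbove_ne _ _) a' b' := h
    obtain ⟨hT, hv, ha, hb⟩ := insTree_inj h'
    subst hT
    subst ha
    subst hb
    have hz : z = z' := Fin.succAbove_right_injective hv
    subst hz
    rfl
  · intro U
    have hn : 0 < m + 1 := Nat.succ_pos m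
    obtain ⟨z, hz⟩ := Fin.exists_succAbove_eq
      (x := dv0 U hn) (y := (delTree U hn).1.root) (dv0_ne_droot U hn)
    refine ⟨⟨delTree U hn, z, da U, db U⟩, ?_⟩
    rw [show ins2 ⟨delTree U hn, z, da U, db U⟩
        = insTree (delTree U hn) ((delTree U hn).1.root.succAbove z)
          (Fin.succAbove_ne _ _) (da U) (db U) from rfl,
      insTree_proof_irrel hz _ (hz ▸ Fin.succAbove_ne _ _) (da U) (db U)]
    exact ins_delTree U hn

end Recursion


/-! #### Double-counting identities inside a fixed tree -/

section Counting

variable {n : ℕ}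

lemma card_subtype_congr' {α β : Type*} [Finite α] [Finite β] (f : α → β)
    (p : α → Prop) (q : β → Prop)
    (hf : ∀ a a', p a → p a' → f a = f a' → a = a')
    (h : ∀ b, q b ↔ ∃ a, p a ∧ f a = b) :
    Nat.card {b // q b} = Nat.card {a // p a} := by
  refine (Nat.card_eq_of_bijective
    (fun x : {a // p a} => (⟨f x.1, (h _).2 ⟨x.1, x.2, rfl⟩⟩ : {b // q b})) ⟨?_, ?_⟩).symm
  · intro x y hxy
    exact Subtype.ext (hf _ _ x.2 y.2 (congrArg Subtype.val hxy))
  · rintro ⟨b, hb⟩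
    obtain ⟨a, ha, rfl⟩ := (h b).1 hb
    exact ⟨⟨a, ha⟩, rfl⟩

lemma count_wanc (T : PlantedTree n) {u : Fin (2*n)} (hu : u ≠ T.1.root) :
    Nat.card {w : Fin (2*n) // w ≠ T.1.root ∧ (w = u ∨ TransGen T.1.E w u)}
      = dep T u := by
  classical
  refine card_subtype_congr' (fun w => if w = T.1.root then u else w)
    (fun w => TransGen T.1.E w u) _ ?_ ?_
  · intro w w' hw hw' hww
    beta_reduce at hww
    by_cases h1 : w = T.1.root <;> by_cases h2 : w' = T.1.root
    · rw [h1, h2]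
    · rw [if_pos h1, if_neg h2] at hww
      exfalso
      rw [← hww] at hw'
      exact T.1.acyclic u hw'
    · rw [if_neg h1, if_pos h2] at hww
      exfalso
      rw [hww] at hw
      exact T.1.acyclic u hw
    · rw [if_neg h1, if_neg h2] at hww
      exact hww
  · intro w
    constructor
    · rintro ⟨hwr, rfl | hwa⟩
      · refine ⟨T.1.root, ?_, by beta_reduce; rw [if_pos rfl]⟩
        rcases root_wanc T w with h | h
        · exact absurd h hwr
        · exact h
      · exact ⟨w, hwa, by beta_reduce; rw [if_neg hwr]⟩
    · rintro ⟨w', hw', rfl⟩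
      beta_reduce
      by_cases h1 : w' = T.1.root
      · rw [if_pos h1]
        exact ⟨hu, Or.inl rfl⟩
      · rw [if_neg h1]
        exact ⟨h1, Or.inr hw'⟩

lemma count_wanc_z {m : ℕ} (T : PlantedTree (m+1)) (u : Fin (2*(m+1))) :
    Nat.card {z : Fin (2*m+1) //
        T.1.root.succAbove z = u ∨ TransGen T.1.E (T.1.root.succAbove z) u}
      = dep T u := by
  by_cases hu : u = T.1.root
  · subst hu
    rw [dep_root T]
    refine card_subtype_empty _ (fun z hz => ?_)
    rcases hz with h | h
    · exact Fin.succAbove_ne _ _ h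
    · rcases TransGen.tail'_iff.1 h with ⟨c, _, hc⟩
      exact no_edge_into_root T c hc
  · rw [← count_wanc T hu]
    refine (card_subtype_congr (T.1.root.succAbove) Fin.succAbove_right_injective
      (fun z => T.1.root.succAbove z = u ∨ TransGen T.1.E (T.1.root.succAbove z) u)
      (fun w => w ≠ T.1.root ∧ (w = u ∨ TransGen T.1.E w u)) ?_).symm
    intro w
    constructor
    · rintro ⟨hwr, hwa⟩
      obtain ⟨z, hz⟩ := Fin.exists_succAbove_eq hwr
      refine ⟨z, ?_, hz⟩
      beta_reduce
      rw [hz]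
      exact hwa
    · rintro ⟨z, hz, rfl⟩
      exact ⟨Fin.succAbove_ne _ _, hz⟩

lemma sum_L {m : ℕ} (T : PlantedTree (m+1)) :
    (∑ z : Fin (2*m+1), Nat.card {i : Fin (m+1) //
        T.1.root.succAbove z = T.1.leaf i
          ∨ TransGen T.1.E (T.1.root.succAbove z) (T.1.leaf i)})
      = treeSackin T := by
  classical
  rw [treeSackin_eq_sum_dep]
  have h1 : ∀ z : Fin (2*m+1), Nat.card {i : Fin (m+1) //
      T.1.root.succAbove z = T.1.leaf i
        ∨ TransGen T.1.E (T.1.root.succAbove z) (T.1.leaf i)}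
      = ∑ i : Fin (m+1), if T.1.root.succAbove z = T.1.leaf i
        ∨ TransGen T.1.E (T.1.root.succAbove z) (T.1.leaf i) then 1 else 0 :=
    fun z => card_ind _
  rw [Finset.sum_congr rfl (fun z _ => h1 z), Finset.sum_comm]
  refine Finset.sum_congr rfl (fun i _ => ?_)
  rw [← count_wanc_z T (T.1.leaf i), card_ind]

lemma sum_dep_z {m : ℕ} (T : PlantedTree (m+1)) :
    (∑ z : Fin (2*m+1), dep T (T.1.root.succAbove z)) = phi T := by
  have := Fin.sum_univ_succAbove (fun v => dep T v) T.1.root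
  rw [phi, show (∑ v : Fin (2*(m+1)), dep T v)
      = dep T T.1.root + ∑ z : Fin (2*m+1), dep T (T.1.root.succAbove z) from this,
    dep_root T]
  omega

lemma sum_V {m : ℕ} (T : PlantedTree (m+1)) :
    (∑ z : Fin (2*m+1), Nat.card {u : Fin (2*(m+1)) //
        T.1.root.succAbove z = u ∨ TransGen T.1.E (T.1.root.succAbove z) u})
      = phi T := by
  classical
  have h1 : ∀ z : Fin (2*m+1), Nat.card {u : Fin (2*(m+1)) //
      T.1.root.succAbove z = u ∨ TransGen T.1.E (T.1.root.succAbove z) u}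
      = ∑ u : Fin (2*(m+1)), if T.1.root.succAbove z = u
        ∨ TransGen T.1.E (T.1.root.succAbove z) u then 1 else 0 :=
    fun z => card_ind _
  rw [Finset.sum_congr rfl (fun z _ => h1 z), Finset.sum_comm, phi]
  refine Finset.sum_congr rfl (fun u _ => ?_)
  rw [← count_wanc_z T u, card_ind]

end Counting


/-! #### The base case: one leaf -/

section Base

lemma fin2_eq {r v l : Fin (2*1)} (h : v ≠ r) (hl : l ≠ r) : v = l := by
  have h1 : v.val ≠ r.val := fun hh => h (Fin.ext hh)
  have h2 : l.val ≠ r.val := fun hh => hl (Fin.ext hh)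
  have := v.isLt
  have := r.isLt
  have := l.isLt
  exact Fin.ext (by omega)

lemma base_E (T : PlantedTree 1) (u v : Fin (2*1)) :
    T.1.E u v ↔ u = T.1.root ∧ v = T.1.leaf 0 := by
  constructor
  · intro h
    have hv : v = T.1.leaf 0 := fin2_eq (edge_ne_root T h) (leaf_ne_root T 0)
    have hu : u ≠ T.1.leaf 0 := by
      rintro rfl
      exact no_edge_from_leaf T 0 v h
    have hur : u = T.1.root := by
      by_contra hur
      exact hu (fin2_eq hur (leaf_ne_root T 0))
    exact ⟨hur, hv⟩
  · rintro ⟨rfl, rfl⟩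
    have h1 := T.1.root_out
    rw [outDeg] at h1
    obtain ⟨⟨c, hc⟩⟩ := nonempty_of_card_eq_one h1
    have hcl : c = T.1.leaf 0 := fin2_eq (edge_ne_root T hc) (leaf_ne_root T 0)
    rwa [hcl] at hc

lemma base_dep_leaf (T : PlantedTree 1) : dep T (T.1.leaf 0) = 1 := by
  refine card_subtype_singleton T.1.root _ (fun w => ?_)
  constructor
  · intro h
    rcases TransGen.tail'_iff.1 h with ⟨c, hwc, hc⟩
    have hc' := (base_E T c (T.1.leaf 0)).1 hc
    rw [hc'.1] at hwc
    rcases reflTransGen_iff_eq_or_transGen.1 hwc with h2 | h2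
    · exact h2.symm
    · exfalso
      rcases TransGen.tail'_iff.1 h2 with ⟨e, _, he⟩
      exact no_edge_into_root T e he
  · rintro rfl
    exact TransGen.single ((base_E T _ _).2 ⟨rfl, rfl⟩)

lemma base_sackin (T : PlantedTree 1) : treeSackin T = 1 := by
  rw [treeSackin_eq_sum_dep,
    show (∑ i : Fin 1, dep T (T.1.leaf i)) = dep T (T.1.leaf 0) from Fin.sum_univ_one _,
    base_dep_leaf T]

lemma base_phi (T : PlantedTree 1) : phi T = 1 := by
  rw [phi,
    show (∑ v : Fin (2*1), dep T v)
      = dep T T.1.root + ∑ z : Fin 1, dep T (T.1.root.succAbove z) from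
      Fin.sum_univ_succAbove _ T.1.root,
    dep_root T,
    show (∑ z : Fin 1, dep T (T.1.root.succAbove z))
      = dep T (T.1.root.succAbove 0) from Fin.sum_univ_one _,
    show T.1.root.succAbove 0 = T.1.leaf 0 from
      fin2_eq (Fin.succAbove_ne _ _) (leaf_ne_root T 0),
    base_dep_leaf T]

lemma oth_ne (r : Fin (2*1)) : (⟨1 - r.val, by omega⟩ : Fin (2*1)) ≠ r := by
  intro h
  have h2 : 1 - r.val = r.val := congrArg Fin.val h
  have := r.isLt
  omega

/-- The unique planted tree on one leaf with a given root. -/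
noncomputable def baseTree (r : Fin (2*1)) : PlantedTree 1 := by
  classical
  refine ⟨{ E := fun u v => u = r ∧ v = ⟨1 - r.val, by omega⟩
            root := r
            leaf := fun _ => ⟨1 - r.val, by omega⟩
            leaf_inj := fun i j _ => Subsingleton.elim i j
            acyclic := rank_acyclic _ (fun v => if v = r then 0 else 1) ?_
            reach := ?_
            root_in := card_subtype_empty _ ?_
            root_out := card_subtype_singleton (⟨1 - r.val, by omega⟩ : Fin (2*1)) _ ?_
            leaf_in := fun i => card_subtype_singleton r _ ?_
            leaf_out := fun i => card_subtype_empty _ ?_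
            internal := ?_ }, ?_⟩
  case _ =>
    rintro u v ⟨rfl, rfl⟩
    beta_reduce
    rw [if_pos rfl, if_neg (oth_ne u)]
    omega
  case _ =>
    intro v
    by_cases hv : v = r
    · rw [hv]
    · have : v = (⟨1 - r.val, by omega⟩ : Fin (2*1)) := by
        have h1 : v.val ≠ r.val := fun hh => hv (Fin.ext hh)
        have := v.isLt
        have := r.isLt
        exact Fin.ext (by simp only; omega)
      rw [this]
      exact ReflTransGen.single ⟨rfl, rfl⟩
  case _ =>
    rintro u ⟨_, h2⟩
    exact oth_ne r h2.symm
  case _ =>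
    intro w
    exact ⟨fun h => h.2, fun h => ⟨rfl, h⟩⟩
  case _ =>
    intro w
    exact ⟨fun h => h.1, fun h => ⟨h, rfl⟩⟩
  case _ =>
    rintro u ⟨h1, _⟩
    exact oth_ne r h1
  case _ =>
    intro v hroot hleaf
    exfalso
    apply hleaf 0
    have h1 : v.val ≠ r.val := fun hh => hroot (Fin.ext hh)
    have := v.isLt
    have := r.isLt
    exact (Fin.ext (by simp only; omega)).symm
  case _ =>
    intro v
    by_cases hv : v = (⟨1 - r.val, by omega⟩ : Fin (2*1))
    · refine le_of_eq (card_subtype_singleton r _ (fun w => ?_))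
      constructor
      · rintro ⟨h1, _⟩
        exact h1
      · rintro rfl
        exact ⟨rfl, hv⟩
    · exact le_of_eq_of_le (card_subtype_empty _ (fun u h => hv h.2)) (by omega)

lemma base_card : Nat.card (PlantedTree 1) = 2 := by
  have hb : Bijective (fun T : PlantedTree 1 => T.1.root) := by
    constructor
    · intro T U h
      dsimp only at h
      have hl : T.1.leaf 0 = U.1.leaf 0 :=
        fin2_eq (r := T.1.root) (leaf_ne_root T 0) (by rw [h]; exact leaf_ne_root U 0)
      refine plantedTree_ext T U ?_ h ?_
      · funext u v
        refine propext (((base_E T u v).trans ?_).trans (base_E U u v).symm)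
        rw [h, hl]
      · funext i
        rw [Subsingleton.elim i 0]
        exact hl
    · intro r
      exact ⟨baseTree r, rfl⟩
  rw [Nat.card_eq_of_bijective _ hb]
  rw [Nat.card_eq_fintype_card, Fintype.card_fin]

end Base


/-! #### The global recursions -/

section Global

/-- Number of planted trees. -/
noncomputable def Fc (n : ℕ) : ℕ := Nat.card (PlantedTree n)

/-- Total Sackin index. -/
noncomputable def Sc (n : ℕ) : ℕ := ∑ᶠ T : PlantedTree n, treeSackin T

/-- Total path length. -/
noncomputable def Pc (n : ℕ) : ℕ := ∑ᶠ T : PlantedTree n, phi T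

lemma nonempty_plantedTree (n : ℕ) (hn : 0 < n) : Nonempty (PlantedTree n) := by
  induction n with
  | zero => omega
  | succ m IH =>
    rcases Nat.eq_zero_or_pos m with rfl | hm
    · exact ⟨baseTree 0⟩
    · obtain ⟨k, rfl⟩ : ∃ k, m = k + 1 := ⟨m - 1, by omega⟩
      obtain ⟨T⟩ := IH (by omega)
      exact ⟨ins2 ⟨T, ⟨0, by omega⟩, ⟨0, by omega⟩, ⟨0, by omega⟩⟩⟩

lemma Fc_pos (n : ℕ) (hn : 0 < n) : 0 < Fc n := by
  have := nonempty_plantedTree n hn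
  exact Nat.card_pos

lemma card_fin' (k : ℕ) : Nat.card (Fin k) = k := by
  rw [Nat.card_eq_fintype_card, Fintype.card_fin]

lemma Fc_rec (m : ℕ) :
    Fc (m+2) = Fc (m+1) * ((2*m+1) * ((2*(m+1)+2) * (2*(m+1)+1))) := by
  rw [Fc, Fc, ← Nat.card_eq_of_bijective _ (ins2_bijective (m := m)),
    Nat.card_prod, Nat.card_prod, Nat.card_prod, card_fin', card_fin', card_fin']

lemma Sc_rec (m : ℕ) :
    Sc (m+2) = (2*(m+1)+2) * ((2*(m+1)+1) *
      ((2*(m+1)) * Sc (m+1) + Pc (m+1) + (2*m+1) * Fc (m+1))) := by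
  classical
  letI : Fintype (PlantedTree (m+1)) := Fintype.ofFinite _
  letI : Fintype (PlantedTree (m+2)) := Fintype.ofFinite _
  have hS1 : Sc (m+1) = ∑ T : PlantedTree (m+1), treeSackin T := by
    rw [Sc, finsum_eq_sum_of_fintype]
  have hP1 : Pc (m+1) = ∑ T : PlantedTree (m+1), phi T := by
    rw [Pc, finsum_eq_sum_of_fintype]
  have hF1 : Fc (m+1) = Fintype.card (PlantedTree (m+1)) := by
    rw [Fc, Nat.card_eq_fintype_card]
  rw [hS1, hP1, hF1, Sc, finsum_eq_sum_of_fintype,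
    ← Fintype.sum_bijective _ (ins2_bijective (m := m))
      (fun q => treeSackin (ins2 q)) treeSackin (fun q => rfl),
    Fintype.sum_prod_type]
  have step1 : ∀ T : PlantedTree (m+1),
      (∑ w : Fin (2*m+1) × Fin (2*(m+1)+2) × Fin (2*(m+1)+1), treeSackin (ins2 ⟨T, w⟩))
        = (2*(m+1)+2) * ((2*(m+1)+1) *
            ((2*m+1) * treeSackin T + treeSackin T + phi T + (2*m+1) * 1)) := by
    intro T
    have hin : ∀ (z : Fin (2*m+1)) (a : Fin (2*(m+1)+2)) (b : Fin (2*(m+1)+1)),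
        treeSackin (ins2 ⟨T, z, a, b⟩)
          = treeSackin T
            + Nat.card {i : Fin (m+1) // T.1.root.succAbove z = T.1.leaf i
                ∨ TransGen T.1.E (T.1.root.succAbove z) (T.1.leaf i)}
            + dep T (T.1.root.succAbove z) + 1 :=
      fun z a b => sackin_ins (Fin.succAbove_ne _ _)
    have hz : ∀ z : Fin (2*m+1),
        (∑ w2 : Fin (2*(m+1)+2) × Fin (2*(m+1)+1), treeSackin (ins2 ⟨T, z, w2⟩))
          = (2*(m+1)+2) * ((2*(m+1)+1) *
              (treeSackin T
                + Nat.card {i : Fin (m+1) // T.1.root.succAbove z = T.1.leaf i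
                    ∨ TransGen T.1.E (T.1.root.succAbove z) (T.1.leaf i)}
                + dep T (T.1.root.succAbove z) + 1)) := by
      intro z
      rw [Fintype.sum_prod_type,
        Finset.sum_congr rfl (fun a _ => Finset.sum_congr rfl (fun b _ => hin z a b)),
        Finset.sum_const, Finset.sum_const, Finset.card_univ, Finset.card_univ,
        Fintype.card_fin, Fintype.card_fin, smul_eq_mul, smul_eq_mul]
    rw [Fintype.sum_prod_type, Finset.sum_congr rfl (fun z _ => hz z),
      ← Finset.mul_sum]
    congr 1
    rw [← Finset.mul_sum]
    congr 1
    rw [Finset.sum_add_distrib, Finset.sum_add_distrib, Finset.sum_add_distrib,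
      Finset.sum_const, Finset.card_univ, Fintype.card_fin, smul_eq_mul, mul_one,
      Finset.sum_const, Finset.card_univ, Fintype.card_fin, smul_eq_mul,
      sum_L T, sum_dep_z T, mul_one]
  rw [Finset.sum_congr rfl (fun T _ => step1 T), ← Finset.mul_sum]
  congr 1
  rw [← Finset.mul_sum]
  congr 1
  rw [Finset.sum_add_distrib, Finset.sum_add_distrib, Finset.sum_add_distrib,
    Finset.sum_const, Finset.card_univ, smul_eq_mul, ← Finset.mul_sum]
  ring

lemma Pc_rec (m : ℕ) :
    Pc (m+2) = (2*(m+1)+2) * ((2*(m+1)+1) *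
      ((2*(m+1)+2) * Pc (m+1) + (2*m+1) * Fc (m+1))) := by
  classical
  letI : Fintype (PlantedTree (m+1)) := Fintype.ofFinite _
  letI : Fintype (PlantedTree (m+2)) := Fintype.ofFinite _
  have hP1 : Pc (m+1) = ∑ T : PlantedTree (m+1), phi T := by
    rw [Pc, finsum_eq_sum_of_fintype]
  have hF1 : Fc (m+1) = Fintype.card (PlantedTree (m+1)) := by
    rw [Fc, Nat.card_eq_fintype_card]
  rw [hP1, hF1, Pc, finsum_eq_sum_of_fintype,
    ← Fintype.sum_bijective _ (ins2_bijective (m := m))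
      (fun q => phi (ins2 q)) phi (fun q => rfl),
    Fintype.sum_prod_type]
  have step1 : ∀ T : PlantedTree (m+1),
      (∑ w : Fin (2*m+1) × Fin (2*(m+1)+2) × Fin (2*(m+1)+1), phi (ins2 ⟨T, w⟩))
        = (2*(m+1)+2) * ((2*(m+1)+1) *
            ((2*m+1) * phi T + phi T + 2 * phi T + (2*m+1) * 1)) := by
    intro T
    have hin : ∀ (z : Fin (2*m+1)) (a : Fin (2*(m+1)+2)) (b : Fin (2*(m+1)+1)),
        phi (ins2 ⟨T, z, a, b⟩)
          = phi T
            + Nat.card {u : Fin (2*(m+1)) // T.1.root.succAbove z = u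
                ∨ TransGen T.1.E (T.1.root.succAbove z) u}
            + 2 * dep T (T.1.root.succAbove z) + 1 :=
      fun z a b => phi_ins (Fin.succAbove_ne _ _)
    have hz : ∀ z : Fin (2*m+1),
        (∑ w2 : Fin (2*(m+1)+2) × Fin (2*(m+1)+1), phi (ins2 ⟨T, z, w2⟩))
          = (2*(m+1)+2) * ((2*(m+1)+1) *
              (phi T
                + Nat.card {u : Fin (2*(m+1)) // T.1.root.succAbove z = u
                    ∨ TransGen T.1.E (T.1.root.succAbove z) u}
                + 2 * dep T (T.1.root.succAbove z) + 1)) := by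
      intro z
      rw [Fintype.sum_prod_type,
        Finset.sum_congr rfl (fun a _ => Finset.sum_congr rfl (fun b _ => hin z a b)),
        Finset.sum_const, Finset.sum_const, Finset.card_univ, Finset.card_univ,
        Fintype.card_fin, Fintype.card_fin, smul_eq_mul, smul_eq_mul]
    rw [Fintype.sum_prod_type, Finset.sum_congr rfl (fun z _ => hz z),
      ← Finset.mul_sum]
    congr 1
    rw [← Finset.mul_sum]
    congr 1
    rw [Finset.sum_add_distrib, Finset.sum_add_distrib, Finset.sum_add_distrib,
      Finset.sum_const, Finset.card_univ, Fintype.card_fin, smul_eq_mul, mul_one,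
      Finset.sum_const, Finset.card_univ, Fintype.card_fin, smul_eq_mul,
      sum_V T, ← Finset.mul_sum, sum_dep_z T, mul_one]
  rw [Finset.sum_congr rfl (fun T _ => step1 T), ← Finset.mul_sum]
  congr 1
  rw [← Finset.mul_sum]
  congr 1
  rw [Finset.sum_add_distrib, Finset.sum_add_distrib, Finset.sum_add_distrib,
    Finset.sum_const, Finset.card_univ, smul_eq_mul, ← Finset.mul_sum,
    ← Finset.mul_sum]
  ring

lemma Sc_one : Sc 1 = 2 := by
  classical
  letI : Fintype (PlantedTree 1) := Fintype.ofFinite _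
  rw [Sc, finsum_eq_sum_of_fintype,
    Finset.sum_congr rfl (fun T _ => base_sackin T),
    Finset.sum_const, Finset.card_univ, smul_eq_mul, mul_one,
    ← Nat.card_eq_fintype_card, base_card]

lemma Pc_one : Pc 1 = 2 := by
  classical
  letI : Fintype (PlantedTree 1) := Fintype.ofFinite _
  rw [Pc, finsum_eq_sum_of_fintype,
    Finset.sum_congr rfl (fun T _ => base_phi T),
    Finset.sum_const, Finset.card_univ, smul_eq_mul, mul_one,
    ← Nat.card_eq_fintype_card, base_card]

open Nat in
lemma main_ident (m : ℕ) :
    ((2*m)! : ℚ) * Sc (m+1) = 4^m * ((m+1)! : ℚ) * (m ! : ℚ) * Fc (m+1)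
      ∧ ((2*m)! : ℚ) * Pc (m+1) + (2*m+1) * ((2*m)! : ℚ) * Fc (m+1)
          = 2 * 4^m * ((m+1)! : ℚ) * (m ! : ℚ) * Fc (m+1) := by
  induction m with
  | zero =>
    have hF : Fc 1 = 2 := base_card
    rw [Sc_one, Pc_one, hF]
    norm_num [Nat.factorial]
  | succ m IH =>
    obtain ⟨IH1, IH2⟩ := IH
    have hSq : (Sc (m+2) : ℚ) = (2*(m+1)+2) * ((2*(m+1)+1) *
        ((2*(m+1)) * Sc (m+1) + Pc (m+1) + (2*m+1) * Fc (m+1))) := by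
      exact_mod_cast congrArg (Nat.cast (R := ℚ)) (Sc_rec m)
    have hPq : (Pc (m+2) : ℚ) = (2*(m+1)+2) * ((2*(m+1)+1) *
        ((2*(m+1)+2) * Pc (m+1) + (2*m+1) * Fc (m+1))) := by
      exact_mod_cast congrArg (Nat.cast (R := ℚ)) (Pc_rec m)
    have hFq : (Fc (m+2) : ℚ) = Fc (m+1) * ((2*m+1) * ((2*(m+1)+2) * (2*(m+1)+1))) := by
      exact_mod_cast congrArg (Nat.cast (R := ℚ)) (Fc_rec m)
    have hfac1 : ((2*(m+1))! : ℚ) = (2*m+2) * ((2*m+1) * ((2*m)! : ℚ)) := by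
      have h1 : 2*(m+1) = (2*m+1)+1 := by ring
      rw [h1, Nat.factorial_succ]
      push_cast [Nat.factorial_succ]
      ring
    have hfac2 : ((m+2)! : ℚ) = (m+2) * ((m+1)! : ℚ) := by
      rw [show m+2 = (m+1)+1 from rfl, Nat.factorial_succ]
      push_cast
      ring
    have hfac3 : ((m+1)! : ℚ) = ((m : ℚ)+1) * (m ! : ℚ) := by
      rw [Nat.factorial_succ]
      push_cast
      ring
    rw [hfac3] at IH1 IH2
    constructor
    · rw [hSq, hFq, hfac1, hfac2, hfac3, pow_succ]
      push_cast
      linear_combination ((2*(m:ℚ)+2) * (2*m+1) * (2*m+4) * (2*m+3) * (2*m+2)) * IH1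
        + ((2*(m:ℚ)+2) * (2*m+1) * (2*m+4) * (2*m+3)) * IH2
    · rw [hPq, hFq, hfac1, hfac2, hfac3, pow_succ]
      push_cast
      linear_combination ((2*(m:ℚ)+2) * (2*m+1) * (2*m+4) * (2*m+3) * (2*m+4)) * IH2
end Global


end Sackin19

open Nat in
/-- the expected Sackin index of a uniformly random planted
binary phylogenetic tree on n leaves equals 4^{n-1}·n!·(n-1)!/(2n-2)!. -/
theorem expected_sackin_tree (n : ℕ) (hn : 1 ≤ n) :
    (∑ᶠ T : PlantedTree n, (treeSackin T : ℚ)) / (Nat.card (PlantedTree n) : ℚ)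
      = 4^(n-1) * (n ! : ℚ) * ((n-1)! : ℚ) / ((2*n-2)! : ℚ) := by
  classical
  obtain ⟨m, rfl⟩ : ∃ m, n = m + 1 := ⟨n - 1, by omega⟩
  obtain ⟨A, -⟩ := Sackin19.main_ident m
  letI : Fintype (PlantedTree (m+1)) := Fintype.ofFinite _
  have hsum : (∑ᶠ T : PlantedTree (m+1), (treeSackin T : ℚ))
      = ((Sackin19.Sc (m+1) : ℕ) : ℚ) := by
    rw [Sackin19.Sc, finsum_eq_sum_of_fintype, finsum_eq_sum_of_fintype]
    push_cast
    rfl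
  have hcard : ((Nat.card (PlantedTree (m+1)) : ℕ) : ℚ)
      = ((Sackin19.Fc (m+1) : ℕ) : ℚ) := rfl
  have hF0 : ((Sackin19.Fc (m+1) : ℕ) : ℚ) ≠ 0 := by
    exact_mod_cast (Sackin19.Fc_pos (m+1) (by omega)).ne'
  have hfac0 : (((2*m)! : ℕ) : ℚ) ≠ 0 := by
    exact_mod_cast (Nat.factorial_pos (2*m)).ne'
  have h1 : m + 1 - 1 = m := rfl
  have h2 : 2*(m+1) - 2 = 2*m := by omega
  rw [hsum, hcard, h1, h2, div_eq_div_iff hF0 hfac0]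
  linear_combination A
end
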